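/- arXiv:1704.02609 — 11 statements merged into one kernel-verified Lean document; each statement's English description precedes it below -/
import Mathlib

section
/- Let X₁, X₂ be i.i.d. with survival function F̄(x) = ½ x^{-α}(1 + x^{ρ}), x ≥ 1, α > 0, ρ < 0, and define H*(x₁,x₂,t) = [t·P(X/t^{1/α} ∈ ([0,x₁]×[0,x₂])^c) − ½(x₁^{-α}+x₂^{-α})] / t^{ρ/α}. Then for all x₁,x₂ > 0: if ρ + α > 0, lim_{t→∞} H*(x₁,x₂,t) = ½(x₁^{-α+ρ} + x₂^{-α+ρ}); if ρ + α = 0, the limit is ½(x₁^{-2α}+x₂^{-2α}) − ¼ x₁^{-α} x₂^{-α}; and if ρ + α < 0, H*(x₁,x₂,t) → −∞. -/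
open Filter Real MeasureTheory ProbabilityTheory

/-- Second-order behaviour for iid Hall–Welsh margins: the normalized joint tail
H*(x₁,x₂,t) converges to a finite limit iff α + ρ ≥ 0, and diverges to −∞ otherwise. -/
theorem hallWelsh_secondOrder {Ω : Type*} [MeasurableSpace Ω] (μ : Measure Ω)
    [IsProbabilityMeasure μ]
    (α ρ : ℝ) (hα : 0 < α) (hρ : ρ < 0)
    (X₁ X₂ : Ω → ℝ) (hm₁ : Measurable X₁) (hm₂ : Measurable X₂)
    (hindep : IndepFun X₁ X₂ μ)
    (hF₁ : ∀ x : ℝ, 1 ≤ x → (μ {ω | x < X₁ ω}).toReal = (1 / 2) * x ^ (-α) * (1 + x ^ ρ))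
    (hF₂ : ∀ x : ℝ, 1 ≤ x → (μ {ω | x < X₂ ω}).toReal = (1 / 2) * x ^ (-α) * (1 + x ^ ρ))
    (Hstar : ℝ → ℝ → ℝ → ℝ)
    (hH : ∀ x₁ x₂ t : ℝ, Hstar x₁ x₂ t =
      (t * (μ {ω | t ^ (1 / α) * x₁ < X₁ ω ∨ t ^ (1 / α) * x₂ < X₂ ω}).toReal
        - (1 / 2) * (x₁ ^ (-α) + x₂ ^ (-α))) / t ^ (ρ / α))
    (x₁ x₂ : ℝ) (hx₁ : 0 < x₁) (hx₂ : 0 < x₂) :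
    (0 < ρ + α →
      Tendsto (fun t => Hstar x₁ x₂ t) atTop
        (nhds ((1 / 2) * (x₁ ^ (-α + ρ) + x₂ ^ (-α + ρ))))) ∧
    (ρ + α = 0 →
      Tendsto (fun t => Hstar x₁ x₂ t) atTop
        (nhds ((1 / 2) * (x₁ ^ (-2 * α) + x₂ ^ (-2 * α))
          - (1 / 4) * x₁ ^ (-α) * x₂ ^ (-α)))) ∧
    (ρ + α < 0 → Tendsto (fun t => Hstar x₁ x₂ t) atTop atBot) := by
  have hα' : α ≠ 0 := hα.ne'
  -- inclusion-exclusion with independence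
  have hunion : ∀ a b : ℝ,
      (μ {ω | a < X₁ ω ∨ b < X₂ ω}).toReal
        = (μ {ω | a < X₁ ω}).toReal + (μ {ω | b < X₂ ω}).toReal
          - (μ {ω | a < X₁ ω}).toReal * (μ {ω | b < X₂ ω}).toReal := by
    intro a b
    have hABset : {ω | a < X₁ ω ∨ b < X₂ ω} = X₁ ⁻¹' Set.Ioi a ∪ X₂ ⁻¹' Set.Ioi b := rfl
    have hind := hindep.measure_inter_preimage_eq_mul (s := Set.Ioi a) (t := Set.Ioi b)
      measurableSet_Ioi measurableSet_Ioi
    have hie := measure_union_add_inter (μ := μ) (t := X₂ ⁻¹' Set.Ioi b)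
      (X₁ ⁻¹' Set.Ioi a) (hm₂ measurableSet_Ioi)
    rw [hind] at hie
    have h1 : μ (X₁ ⁻¹' Set.Ioi a) ≠ ⊤ := measure_ne_top _ _
    have h2 : μ (X₂ ⁻¹' Set.Ioi b) ≠ ⊤ := measure_ne_top _ _
    have h3 : μ (X₁ ⁻¹' Set.Ioi a ∪ X₂ ⁻¹' Set.Ioi b) ≠ ⊤ := measure_ne_top _ _
    have hcongr := congrArg ENNReal.toReal hie
    rw [ENNReal.toReal_add h3 (ENNReal.mul_ne_top h1 h2),
      ENNReal.toReal_add h1 h2, ENNReal.toReal_mul] at hcongr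
    rw [hABset]
    show (μ (X₁ ⁻¹' Set.Ioi a ∪ X₂ ⁻¹' Set.Ioi b)).toReal
        = (μ (X₁ ⁻¹' Set.Ioi a)).toReal + (μ (X₂ ⁻¹' Set.Ioi b)).toReal
          - (μ (X₁ ⁻¹' Set.Ioi a)).toReal * (μ (X₂ ⁻¹' Set.Ioi b)).toReal
    linarith
  -- eventual closed form
  set G : ℝ → ℝ := fun t => (1 / 2) * (x₁ ^ (-α + ρ) + x₂ ^ (-α + ρ))
      - (1 / 4) * t ^ (-(ρ + α) / α) *
        ((x₁ ^ (-α) * (1 + t ^ (ρ / α) * x₁ ^ ρ)) *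
         (x₂ ^ (-α) * (1 + t ^ (ρ / α) * x₂ ^ ρ))) with hGdef
  have hrpow_top : Tendsto (fun t : ℝ => t ^ (1 / α)) atTop atTop :=
    tendsto_rpow_atTop (by positivity)
  have hev1 : ∀ᶠ t : ℝ in atTop, 1 ≤ t ^ (1 / α) * x₁ :=
    (hrpow_top.atTop_mul_const hx₁).eventually_ge_atTop 1
  have hev2 : ∀ᶠ t : ℝ in atTop, 1 ≤ t ^ (1 / α) * x₂ :=
    (hrpow_top.atTop_mul_const hx₂).eventually_ge_atTop 1
  have heq : (fun t => Hstar x₁ x₂ t) =ᶠ[atTop] G := by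
    filter_upwards [eventually_gt_atTop (0 : ℝ), hev1, hev2] with t ht0 h1 h2
    have htr : ∀ y : ℝ, (t ^ (1 / α)) ^ y = t ^ (y / α) := by
      intro y
      rw [← Real.rpow_mul ht0.le]
      congr 1
      field_simp
    have e1 : (t ^ (1 / α) * x₁) ^ (-α) = (t ^ (ρ / α) * t ^ (-(ρ + α) / α)) * x₁ ^ (-α) := by
      rw [Real.mul_rpow (Real.rpow_nonneg ht0.le _) hx₁.le, htr, ← Real.rpow_add ht0]
      congr 2
      field_simp
      ring
    have e2 : (t ^ (1 / α) * x₂) ^ (-α) = (t ^ (ρ / α) * t ^ (-(ρ + α) / α)) * x₂ ^ (-α) := by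
      rw [Real.mul_rpow (Real.rpow_nonneg ht0.le _) hx₂.le, htr, ← Real.rpow_add ht0]
      congr 2
      field_simp
      ring
    have e3 : (t ^ (1 / α) * x₁) ^ ρ = t ^ (ρ / α) * x₁ ^ ρ := by
      rw [Real.mul_rpow (Real.rpow_nonneg ht0.le _) hx₁.le, htr]
    have e4 : (t ^ (1 / α) * x₂) ^ ρ = t ^ (ρ / α) * x₂ ^ ρ := by
      rw [Real.mul_rpow (Real.rpow_nonneg ht0.le _) hx₂.le, htr]
    have eG1 : x₁ ^ (-α + ρ) = x₁ ^ (-α) * x₁ ^ ρ := Real.rpow_add hx₁ _ _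
    have eG2 : x₂ ^ (-α + ρ) = x₂ ^ (-α) * x₂ ^ ρ := Real.rpow_add hx₂ _ _
    have hP0 : (0 : ℝ) < t ^ (ρ / α) := Real.rpow_pos_of_pos ht0 _
    have hQ0 : (0 : ℝ) < t ^ (-(ρ + α) / α) := Real.rpow_pos_of_pos ht0 _
    have key : t * (t ^ (ρ / α) * t ^ (-(ρ + α) / α)) = 1 := by
      rw [← Real.rpow_add ht0]
      have : ρ / α + -(ρ + α) / α = -1 := by field_simp; ring
      rw [this, Real.rpow_neg_one]
      field_simp
    rw [hH, hunion, hF₁ _ h1, hF₂ _ h2, hGdef]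
    simp only [e1, e2, e3, e4, eG1, eG2]
    set P := t ^ (ρ / α) with hP
    set Q := t ^ (-(ρ + α) / α) with hQ
    have htval : t = (P * Q)⁻¹ := by
      field_simp
      linarith [key]
    rw [htval]
    field_simp
    ring
  -- limits of auxiliary powers
  have hu0 : Tendsto (fun t : ℝ => t ^ (ρ / α)) atTop (nhds 0) := by
    have hlt : 0 < -(ρ / α) := by
      have := div_neg_of_neg_of_pos hρ hα
      linarith
    have := tendsto_rpow_neg_atTop hlt
    simpa using this
  refine ⟨?_, ?_, ?_⟩
  · intro hpos
    have hv0 : Tendsto (fun t : ℝ => t ^ (-(ρ + α) / α)) atTop (nhds 0) := by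
      have hfe : (fun t : ℝ => t ^ (-(ρ + α) / α)) = fun t : ℝ => t ^ (-((ρ + α) / α)) := by
        funext t; rw [neg_div]
      rw [hfe]
      exact tendsto_rpow_neg_atTop (by positivity)
    have hG : Tendsto G atTop (nhds ((1 / 2) * (x₁ ^ (-α + ρ) + x₂ ^ (-α + ρ))
        - (1 / 4) * 0 * ((x₁ ^ (-α) * (1 + 0 * x₁ ^ ρ)) * (x₂ ^ (-α) * (1 + 0 * x₂ ^ ρ))))) := by
      exact tendsto_const_nhds.sub ((tendsto_const_nhds.mul hv0).mul
        (((tendsto_const_nhds.mul (tendsto_const_nhds.add (hu0.mul tendsto_const_nhds))).mul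
          (tendsto_const_nhds.mul (tendsto_const_nhds.add (hu0.mul tendsto_const_nhds))))))
    have : ((1 / 2) * (x₁ ^ (-α + ρ) + x₂ ^ (-α + ρ))
        - (1 / 4) * 0 * ((x₁ ^ (-α) * (1 + 0 * x₁ ^ ρ)) * (x₂ ^ (-α) * (1 + 0 * x₂ ^ ρ))))
        = (1 / 2) * (x₁ ^ (-α + ρ) + x₂ ^ (-α + ρ)) := by ring
    rw [this] at hG
    exact hG.congr' heq.symm
  · intro hzero
    have hρα : ρ = -α := by linarith
    have hGsimp : G = fun t => (1 / 2) * (x₁ ^ (-2 * α) + x₂ ^ (-2 * α))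
        - (1 / 4) * 1 *
          ((x₁ ^ (-α) * (1 + t ^ (ρ / α) * x₁ ^ ρ)) *
           (x₂ ^ (-α) * (1 + t ^ (ρ / α) * x₂ ^ ρ))) := by
      funext t
      simp only [hGdef]
      have h1 : -(ρ + α) / α = 0 := by rw [hzero]; simp
      have h2 : -α + ρ = -2 * α := by linarith
      rw [h1, h2, Real.rpow_zero]
    have hG : Tendsto G atTop (nhds ((1 / 2) * (x₁ ^ (-2 * α) + x₂ ^ (-2 * α))
        - (1 / 4) * 1 * ((x₁ ^ (-α) * (1 + 0 * x₁ ^ ρ)) * (x₂ ^ (-α) * (1 + 0 * x₂ ^ ρ))))) := by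
      rw [hGsimp]
      exact tendsto_const_nhds.sub (tendsto_const_nhds.mul
        (((tendsto_const_nhds.mul (tendsto_const_nhds.add (hu0.mul tendsto_const_nhds))).mul
          (tendsto_const_nhds.mul (tendsto_const_nhds.add (hu0.mul tendsto_const_nhds))))))
    have : ((1 / 2) * (x₁ ^ (-2 * α) + x₂ ^ (-2 * α))
        - (1 / 4) * 1 * ((x₁ ^ (-α) * (1 + 0 * x₁ ^ ρ)) * (x₂ ^ (-α) * (1 + 0 * x₂ ^ ρ))))
        = (1 / 2) * (x₁ ^ (-2 * α) + x₂ ^ (-2 * α)) - (1 / 4) * x₁ ^ (-α) * x₂ ^ (-α) := by ring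
    rw [this] at hG
    exact hG.congr' heq.symm
  · intro hneg
    have hvtop : Tendsto (fun t : ℝ => (1 / 4) * t ^ (-(ρ + α) / α)) atTop atTop := by
      refine Tendsto.const_mul_atTop (by norm_num) (tendsto_rpow_atTop ?_)
      have : 0 < -(ρ + α) := by linarith
      positivity
    have hW : Tendsto (fun t : ℝ => (x₁ ^ (-α) * (1 + t ^ (ρ / α) * x₁ ^ ρ)) *
        (x₂ ^ (-α) * (1 + t ^ (ρ / α) * x₂ ^ ρ))) atTop
        (nhds ((x₁ ^ (-α) * (1 + 0 * x₁ ^ ρ)) * (x₂ ^ (-α) * (1 + 0 * x₂ ^ ρ)))) :=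
      ((tendsto_const_nhds.mul (tendsto_const_nhds.add (hu0.mul tendsto_const_nhds))).mul
          (tendsto_const_nhds.mul (tendsto_const_nhds.add (hu0.mul tendsto_const_nhds))))
    have hWpos : 0 < (x₁ ^ (-α) * (1 + 0 * x₁ ^ ρ)) * (x₂ ^ (-α) * (1 + 0 * x₂ ^ ρ)) := by
      have h1 : (0:ℝ) < x₁ ^ (-α) := Real.rpow_pos_of_pos hx₁ _
      have h2 : (0:ℝ) < x₂ ^ (-α) := Real.rpow_pos_of_pos hx₂ _
      nlinarith
    have hmul : Tendsto (fun t : ℝ => (1 / 4) * t ^ (-(ρ + α) / α) *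
        ((x₁ ^ (-α) * (1 + t ^ (ρ / α) * x₁ ^ ρ)) *
         (x₂ ^ (-α) * (1 + t ^ (ρ / α) * x₂ ^ ρ)))) atTop atTop :=
      hvtop.atTop_mul_pos hWpos hW
    have hG : Tendsto G atTop atBot := by
      rw [hGdef]
      simp only [sub_eq_add_neg]
      exact tendsto_atBot_add_const_left _ _ (tendsto_neg_atTop_atBot.comp hmul)
    exact hG.congr' heq.symm
end

section
/- Let (X₁,X₂) = B(Z₁,0) + (1−B)(0,Z₂), where B is Bernoulli(1/2) independent of independent Z₁, Z₂ with survival functions F̄₁(x) = ½ x^{-2}(1+x^{-1}) and F̄₂(x) = x^{-2}(1 − ½x^{-1} + ½x^{-2}) for x ≥ 1. Then for x₁, x₂ > 0, lim_{t→∞} t·P((X₁,X₂)/t^{1/2} ∈ ([0,x₁]×[0,x₂])^c) = 1/(4x₁²) + 1/(2x₂²). -/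
open Filter Real MeasureTheory ProbabilityTheory

/-- Axis-supported mixture model: first-order multivariate regular variation with
limit measure ν([0,(x₁,x₂)]ᶜ) = ¼x₁⁻² + ½x₂⁻². -/
theorem mixture_MRV {Ω : Type*} [MeasurableSpace Ω] (μ : Measure Ω) [IsProbabilityMeasure μ]
    (B Z₁ Z₂ : Ω → ℝ) (hB : Measurable B) (hZ₁ : Measurable Z₁) (hZ₂ : Measurable Z₂)
    (hindep : iIndepFun ![B, Z₁, Z₂] μ)
    (hB1 : μ {ω | B ω = 1} = 1 / 2) (hB0 : μ {ω | B ω = 0} = 1 / 2)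
    (hF₁ : ∀ x : ℝ, 1 ≤ x →
      (μ {ω | x < Z₁ ω}).toReal = (1 / 2) * x ^ (-2 : ℝ) * (1 + x⁻¹))
    (hF₂ : ∀ x : ℝ, 1 ≤ x →
      (μ {ω | x < Z₂ ω}).toReal = x ^ (-2 : ℝ) * (1 - (1 / 2) * x⁻¹ + (1 / 2) * x ^ (-2 : ℝ)))
    (X₁ X₂ : Ω → ℝ) (hX₁ : X₁ = fun ω => B ω * Z₁ ω) (hX₂ : X₂ = fun ω => (1 - B ω) * Z₂ ω)
    (x₁ x₂ : ℝ) (hx₁ : 0 < x₁) (hx₂ : 0 < x₂) :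
    Tendsto (fun t : ℝ =>
        t * (μ {ω | t ^ (1 / 2 : ℝ) * x₁ < X₁ ω ∨ t ^ (1 / 2 : ℝ) * x₂ < X₂ ω}).toReal)
      atTop (nhds (1 / (4 * x₁ ^ 2) + 1 / (2 * x₂ ^ 2))) := by
  -- the explicit formula valid for large t
  set g : ℝ → ℝ := fun t =>
    (1 / 4) * x₁ ^ (-2 : ℝ) * (1 + (t ^ (1 / 2 : ℝ) * x₁)⁻¹)
      + (1 / 2) * x₂ ^ (-2 : ℝ)
        * (1 - (1 / 2) * (t ^ (1 / 2 : ℝ) * x₂)⁻¹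
            + (1 / 2) * (t ^ (1 / 2 : ℝ) * x₂) ^ (-2 : ℝ)) with hg
  have hs1 : Tendsto (fun t : ℝ => t ^ (1 / 2 : ℝ) * x₁) atTop atTop :=
    (tendsto_rpow_atTop (by norm_num)).atTop_mul_const hx₁
  have hs2 : Tendsto (fun t : ℝ => t ^ (1 / 2 : ℝ) * x₂) atTop atTop :=
    (tendsto_rpow_atTop (by norm_num)).atTop_mul_const hx₂
  -- limit of g
  have hginv : ∀ x : ℝ, 0 < x → x ^ (-2 : ℝ) = (x ^ 2)⁻¹ := by
    intro x hx
    rw [show (-2 : ℝ) = -((2 : ℕ) : ℝ) by norm_num, Real.rpow_neg hx.le, Real.rpow_natCast]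
  have hglim : Tendsto g atTop (nhds (1 / (4 * x₁ ^ 2) + 1 / (2 * x₂ ^ 2))) := by
    have h1 : Tendsto (fun t : ℝ => (t ^ (1 / 2 : ℝ) * x₁)⁻¹) atTop (nhds 0) :=
      tendsto_inv_atTop_zero.comp hs1
    have h2 : Tendsto (fun t : ℝ => (t ^ (1 / 2 : ℝ) * x₂)⁻¹) atTop (nhds 0) :=
      tendsto_inv_atTop_zero.comp hs2
    have h3 : Tendsto (fun t : ℝ => (t ^ (1 / 2 : ℝ) * x₂) ^ (-2 : ℝ)) atTop (nhds 0) :=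
      (tendsto_rpow_neg_atTop (by norm_num)).comp hs2
    have hT := ((h1.const_add 1).const_mul ((1 / 4) * x₁ ^ (-2 : ℝ))).add
      ((((h2.const_mul (1 / 2 : ℝ)).const_sub 1).add
        (h3.const_mul (1 / 2 : ℝ))).const_mul ((1 / 2) * x₂ ^ (-2 : ℝ)))
    simp only [mul_zero, add_zero, sub_zero, mul_one] at hT
    have hval : 1 / (4 * x₁ ^ 2) + 1 / (2 * x₂ ^ 2)
        = 1 / 4 * x₁ ^ (-2 : ℝ) + 1 / 2 * x₂ ^ (-2 : ℝ) := by
      rw [hginv x₁ hx₁, hginv x₂ hx₂]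
      field_simp
    rw [hval]
    exact hT
  refine Tendsto.congr' ?_ hglim
  -- eventual equality
  have hev : ∀ᶠ t : ℝ in atTop,
      0 < t ∧ 1 ≤ t ^ (1 / 2 : ℝ) * x₁ ∧ 1 ≤ t ^ (1 / 2 : ℝ) * x₂ := by
    filter_upwards [eventually_gt_atTop (0 : ℝ), hs1.eventually_ge_atTop 1,
      hs2.eventually_ge_atTop 1] with t h0 h1 h2
    exact ⟨h0, h1, h2⟩
  filter_upwards [hev] with t ht
  obtain ⟨ht0, ht1, ht2⟩ := ht
  set s : ℝ := t ^ (1 / 2 : ℝ) with hsdef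
  have hspos : 0 < s := Real.rpow_pos_of_pos ht0 _
  have hsx₁ : 0 < s * x₁ := lt_of_lt_of_le one_pos ht1
  have hsx₂ : 0 < s * x₂ := lt_of_lt_of_le one_pos ht2
  -- measurability of the Bernoulli sets
  have hS1 : MeasurableSet {ω | B ω = 1} := hB (measurableSet_singleton 1)
  have hS0 : MeasurableSet {ω | B ω = 0} := hB (measurableSet_singleton 0)
  have hdisj : Disjoint {ω | B ω = 0} {ω | B ω = 1} := by
    rw [Set.disjoint_left]
    intro ω h0 h1
    simp only [Set.mem_setOf_eq] at h0 h1
    rw [h0] at h1; norm_num at h1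
  have hnull : μ ({ω | B ω = 0} ∪ {ω | B ω = 1})ᶜ = 0 := by
    rw [measure_compl (hS0.union hS1) (measure_ne_top _ _), measure_union hdisj hS1, hB0, hB1]
    rw [measure_univ, ENNReal.add_halves, tsub_self]
  -- decomposition of the event
  set E : Set Ω := {ω | s * x₁ < X₁ ω ∨ s * x₂ < X₂ ω} with hE
  have hE1 : E ∩ {ω | B ω = 1} = Z₁ ⁻¹' Set.Ioi (s * x₁) ∩ B ⁻¹' {1} := by
    ext ω
    simp only [hE, hX₁, hX₂, Set.mem_inter_iff, Set.mem_setOf_eq, Set.mem_preimage,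
      Set.mem_Ioi, Set.mem_singleton_iff]
    constructor
    · rintro ⟨h | h, hb⟩
      · rw [hb, one_mul] at h; exact ⟨h, hb⟩
      · rw [hb] at h; norm_num at h; exact absurd h (not_lt.2 hsx₂.le)
    · rintro ⟨h, hb⟩
      exact ⟨Or.inl (by rw [hb, one_mul]; exact h), hb⟩
  have hE0 : E ∩ {ω | B ω = 0} = Z₂ ⁻¹' Set.Ioi (s * x₂) ∩ B ⁻¹' {0} := by
    ext ω
    simp only [hE, hX₁, hX₂, Set.mem_inter_iff, Set.mem_setOf_eq, Set.mem_preimage,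
      Set.mem_Ioi, Set.mem_singleton_iff]
    constructor
    · rintro ⟨h | h, hb⟩
      · rw [hb] at h; norm_num at h; exact absurd h (not_lt.2 hsx₁.le)
      · rw [hb] at h; norm_num at h; exact ⟨h, hb⟩
    · rintro ⟨h, hb⟩
      exact ⟨Or.inr (by rw [hb]; norm_num; exact h), hb⟩
  -- independence
  have hI1 : IndepFun Z₁ B μ := by
    have h := hindep.indepFun (show (1 : Fin 3) ≠ 0 by decide)
    simpa using h
  have hI2 : IndepFun Z₂ B μ := by
    have h := hindep.indepFun (show (2 : Fin 3) ≠ 0 by decide)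
    simpa using h
  have hmul1 : μ (Z₁ ⁻¹' Set.Ioi (s * x₁) ∩ B ⁻¹' {1})
      = μ (Z₁ ⁻¹' Set.Ioi (s * x₁)) * (1 / 2) := by
    rw [hI1.measure_inter_preimage_eq_mul _ _ measurableSet_Ioi (measurableSet_singleton 1)]
    congr 1
  have hmul0 : μ (Z₂ ⁻¹' Set.Ioi (s * x₂) ∩ B ⁻¹' {0})
      = μ (Z₂ ⁻¹' Set.Ioi (s * x₂)) * (1 / 2) := by
    rw [hI2.measure_inter_preimage_eq_mul _ _ measurableSet_Ioi (measurableSet_singleton 0)]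
    congr 1
  -- total measure of the event
  have hEsplit : μ E = μ (Z₁ ⁻¹' Set.Ioi (s * x₁)) * (1 / 2)
      + μ (Z₂ ⁻¹' Set.Ioi (s * x₂)) * (1 / 2) := by
    have hd : μ (E \ ({ω | B ω = 0} ∪ {ω | B ω = 1})) = 0 :=
      measure_mono_null (Set.diff_subset_compl _ _) hnull
    have h1 : μ (E ∩ ({ω | B ω = 0} ∪ {ω | B ω = 1})) = μ E := by
      have := measure_inter_add_diff E (hS0.union hS1) (μ := μ)
      rw [hd, add_zero] at this
      exact this
    rw [← h1, Set.inter_union_distrib_left, measure_union, hE1, hE0, hmul1, hmul0, add_comm]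
    · exact (hdisj.mono Set.inter_subset_right Set.inter_subset_right)
    · rw [hE1]; exact (hZ₁ measurableSet_Ioi).inter (hB (measurableSet_singleton 1))
  -- turn into reals
  have htoReal : (μ E).toReal
      = (μ {ω | s * x₁ < Z₁ ω}).toReal * (1 / 2) + (μ {ω | s * x₂ < Z₂ ω}).toReal * (1 / 2) := by
    rw [hEsplit, ENNReal.toReal_add (ENNReal.mul_ne_top (measure_ne_top μ _) (by norm_num)) (ENNReal.mul_ne_top (measure_ne_top μ _) (by norm_num)), ENNReal.toReal_mul,
      ENNReal.toReal_mul]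
    norm_num
    rfl
  show g t = t * (μ E).toReal
  rw [htoReal, hF₁ _ ht1, hF₂ _ ht2]
  -- rpow algebra
  have hkey : ∀ x : ℝ, 0 < x → (t ^ (1 / 2 : ℝ) * x) ^ (-2 : ℝ) = t⁻¹ * x ^ (-2 : ℝ) := by
    intro x hx
    rw [Real.mul_rpow (Real.rpow_nonneg ht0.le _) hx.le, ← Real.rpow_mul ht0.le,
      show (1 / 2 : ℝ) * (-2) = -1 by norm_num, Real.rpow_neg_one]
  rw [hg]
  simp only [hsdef]
  rw [hkey x₁ hx₁, hkey x₂ hx₂]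
  have htne : t ≠ 0 := ne_of_gt ht0
  field_simp
  ring
end

section
/- In the setting where (X₁,X₂) = B(Z₁,0)+(1−B)(0,Z₂) with B ∼ Bernoulli(1/2) independent of independent Z₁, Z₂ having survival functions F̄₁(x) = ½x^{-2}(1+x^{-1}) and F̄₂(x) = x^{-2}(1 − ½x^{-1} + ½x^{-2}) for x ≥ 1: for every x₁, x₂ > 0, lim_{t→∞} [t·P((X₁,X₂)/t^{1/2} ∈ ([0,x₁]×[0,x₂])^c) − (¼x₁^{-2} + ½x₂^{-2})] / t^{-1/2} = ¼(x₁^{-3} − x₂^{-3}). -/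
open Filter Real MeasureTheory ProbabilityTheory

/-- Axis-supported mixture model: first-order multivariate regular variation with
limit measure ν([0,(x₁,x₂)]ᶜ) = ¼x₁⁻² + ½x₂⁻². -/
theorem mixture_2MRV {Ω : Type*} [MeasurableSpace Ω] (μ : Measure Ω) [IsProbabilityMeasure μ]
    (B Z₁ Z₂ : Ω → ℝ) (hB : Measurable B) (hZ₁ : Measurable Z₁) (hZ₂ : Measurable Z₂)
    (hindep : iIndepFun ![B, Z₁, Z₂] μ)
    (hB1 : μ {ω | B ω = 1} = 1 / 2) (hB0 : μ {ω | B ω = 0} = 1 / 2)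
    (hF₁ : ∀ x : ℝ, 1 ≤ x →
      (μ {ω | x < Z₁ ω}).toReal = (1 / 2) * x ^ (-2 : ℝ) * (1 + x⁻¹))
    (hF₂ : ∀ x : ℝ, 1 ≤ x →
      (μ {ω | x < Z₂ ω}).toReal = x ^ (-2 : ℝ) * (1 - (1 / 2) * x⁻¹ + (1 / 2) * x ^ (-2 : ℝ)))
    (X₁ X₂ : Ω → ℝ) (hX₁ : X₁ = fun ω => B ω * Z₁ ω) (hX₂ : X₂ = fun ω => (1 - B ω) * Z₂ ω)
    (x₁ x₂ : ℝ) (hx₁ : 0 < x₁) (hx₂ : 0 < x₂) :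
    Tendsto (fun t : ℝ =>
        (t * (μ {ω | t ^ (1 / 2 : ℝ) * x₁ < X₁ ω ∨ t ^ (1 / 2 : ℝ) * x₂ < X₂ ω}).toReal
          - ((1 / 4) * x₁ ^ (-2 : ℝ) + (1 / 2) * x₂ ^ (-2 : ℝ))) / t ^ (-(1 / 2) : ℝ))
      atTop (nhds ((1 / 4) * (x₁ ^ (-3 : ℝ) - x₂ ^ (-3 : ℝ)))) := by
  -- independence of Z₁ and B, Z₂ and B
  have hiZ1B : IndepFun Z₁ B μ := by
    have h := hindep.indepFun (show (1 : Fin 3) ≠ 0 by decide)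
    simpa using h
  have hiZ2B : IndepFun Z₂ B μ := by
    have h := hindep.indepFun (show (2 : Fin 3) ≠ 0 by decide)
    simpa using h
  have hA1 : MeasurableSet {ω | B ω = 1} := hB (measurableSet_singleton 1)
  have hA0 : MeasurableSet {ω | B ω = 0} := hB (measurableSet_singleton 0)
  have hdisj : Disjoint {ω | B ω = 1} {ω | B ω = 0} := by
    rw [Set.disjoint_left]
    intro ω h1 h0
    simp only [Set.mem_setOf_eq] at h1 h0
    rw [h1] at h0; norm_num at h0
  have hnull : μ ({ω | B ω = 1} ∪ {ω | B ω = 0})ᶜ = 0 := by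
    have hu : μ ({ω | B ω = 1} ∪ {ω | B ω = 0}) = 1 := by
      rw [measure_union hdisj hA0, hB1, hB0, ENNReal.add_halves]
    rw [measure_compl (hA1.union hA0) (measure_ne_top μ _), measure_univ, hu, tsub_self]
  -- key splitting for any s > 0
  have key : ∀ s : ℝ, 0 < s →
      μ {ω | s * x₁ < X₁ ω ∨ s * x₂ < X₂ ω}
        = μ {ω | s * x₁ < Z₁ ω} * μ {ω | B ω = 1}
          + μ {ω | s * x₂ < Z₂ ω} * μ {ω | B ω = 0} := by
    intro s hs
    set E : Set Ω := {ω | s * x₁ < X₁ ω ∨ s * x₂ < X₂ ω} with hE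
    have hEmeas : MeasurableSet E := by
      subst hX₁ hX₂
      exact ((measurableSet_lt measurable_const (hB.mul hZ₁)).union
        (measurableSet_lt measurable_const ((measurable_const.sub hB).mul hZ₂)))
    have hE1 : E ∩ {ω | B ω = 1} = {ω | s * x₁ < Z₁ ω} ∩ {ω | B ω = 1} := by
      ext ω
      simp only [Set.mem_inter_iff, Set.mem_setOf_eq, hE, hX₁, hX₂]
      constructor
      · rintro ⟨h, hb⟩
        refine ⟨?_, hb⟩
        rcases h with h | h
        · rwa [hb, one_mul] at h
        · rw [hb] at h; simp at h
          exact absurd h (not_lt.2 (le_of_lt (mul_pos hs hx₂))).elim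
      · rintro ⟨h, hb⟩
        exact ⟨Or.inl (by rwa [hb, one_mul]), hb⟩
    have hE0 : E ∩ {ω | B ω = 0} = {ω | s * x₂ < Z₂ ω} ∩ {ω | B ω = 0} := by
      ext ω
      simp only [Set.mem_inter_iff, Set.mem_setOf_eq, hE, hX₁, hX₂]
      constructor
      · rintro ⟨h, hb⟩
        refine ⟨?_, hb⟩
        rcases h with h | h
        · rw [hb, zero_mul] at h
          exact absurd h (not_lt.2 (le_of_lt (mul_pos hs hx₁))).elim
        · rwa [hb, sub_zero, one_mul] at h
      · rintro ⟨h, hb⟩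
        exact ⟨Or.inr (by rwa [hb, sub_zero, one_mul]), hb⟩
    have hsplit : μ E = μ (E ∩ {ω | B ω = 1}) + μ (E ∩ {ω | B ω = 0}) := by
      have h1 := measure_inter_add_diff (μ := μ) E (hA1.union hA0)
      have hd : μ (E \ ({ω | B ω = 1} ∪ {ω | B ω = 0})) = 0 :=
        measure_mono_null (Set.diff_subset_compl _ _) hnull
      have h2 : E ∩ ({ω | B ω = 1} ∪ {ω | B ω = 0})
          = (E ∩ {ω | B ω = 1}) ∪ (E ∩ {ω | B ω = 0}) := Set.inter_union_distrib_left ..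
      rw [h2, measure_union (hdisj.mono Set.inter_subset_right Set.inter_subset_right)
        (hEmeas.inter hA0)] at h1
      rw [← h1, hd, add_zero]
    rw [hsplit, hE1, hE0]
    congr 1
    · have := hiZ1B.measure_inter_preimage_eq_mul (s := Set.Ioi (s * x₁)) (t := {1})
        measurableSet_Ioi (measurableSet_singleton 1)
      simpa [Set.preimage, Set.Ioi] using this
    · have := hiZ2B.measure_inter_preimage_eq_mul (s := Set.Ioi (s * x₂)) (t := {0})
        measurableSet_Ioi (measurableSet_singleton 0)
      simpa [Set.preimage, Set.Ioi] using this
  -- limit function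
  have hlim : Tendsto (fun t : ℝ =>
      (1 / 4) * (x₁ ^ (-3 : ℝ) - x₂ ^ (-3 : ℝ)) + (1 / 4) * x₂ ^ (-4 : ℝ) * t ^ (-(1 / 2) : ℝ))
      atTop (nhds ((1 / 4) * (x₁ ^ (-3 : ℝ) - x₂ ^ (-3 : ℝ)))) := by
    have h := tendsto_rpow_neg_atTop (show (0:ℝ) < 1 / 2 by norm_num)
    have := tendsto_const_nhds (x := (1 / 4) * (x₁ ^ (-3 : ℝ) - x₂ ^ (-3 : ℝ)))
      (f := atTop (α := ℝ)) |>.add ((tendsto_const_nhds (x := (1/4) * x₂ ^ (-4:ℝ))).mul h)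
    simpa using this
  refine hlim.congr' ?_
  filter_upwards [eventually_ge_atTop (max 1 (max (x₁⁻¹ ^ 2) (x₂⁻¹ ^ 2)))] with t ht
  have ht1 : (1 : ℝ) ≤ t := le_trans (le_max_left _ _) ht
  have ht0 : (0 : ℝ) < t := lt_of_lt_of_le one_pos ht1
  set s : ℝ := t ^ (1 / 2 : ℝ) with hsdef
  have hs0 : 0 < s := rpow_pos_of_pos ht0 _
  have hs2 : s ^ 2 = t := by
    rw [hsdef, ← Real.rpow_natCast (t ^ (1/2:ℝ)) 2, ← Real.rpow_mul ht0.le]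
    norm_num
  have hsqrt : ∀ a : ℝ, 0 < a → a⁻¹ ^ 2 ≤ t → 1 ≤ s * a := by
    intro a ha hle
    have h1 : a⁻¹ ≤ s := by
      have := Real.sqrt_le_sqrt hle
      rwa [Real.sqrt_sq (by positivity), Real.sqrt_eq_rpow, ← hsdef] at this
    calc (1 : ℝ) = a⁻¹ * a := (inv_mul_cancel₀ ha.ne').symm
    _ ≤ s * a := mul_le_mul_of_nonneg_right h1 ha.le
  have hsx₁ : 1 ≤ s * x₁ :=
    hsqrt x₁ hx₁ (le_trans (le_trans (le_max_left _ _) (le_max_right _ _)) ht)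
  have hsx₂ : 1 ≤ s * x₂ :=
    hsqrt x₂ hx₂ (le_trans (le_trans (le_max_right _ _) (le_max_right _ _)) ht)
  -- measure computation
  have hmeq := key s hs0
  have hBr1 : (μ {ω | B ω = 1}).toReal = 1 / 2 := by rw [hB1]; simp
  have hBr0 : (μ {ω | B ω = 0}).toReal = 1 / 2 := by rw [hB0]; simp
  have htr : (μ {ω | s * x₁ < X₁ ω ∨ s * x₂ < X₂ ω}).toReal
      = (μ {ω | s * x₁ < Z₁ ω}).toReal * (1 / 2)
        + (μ {ω | s * x₂ < Z₂ ω}).toReal * (1 / 2) := by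
    rw [hmeq, ENNReal.toReal_add (by finiteness) (by finiteness), ENNReal.toReal_mul,
      ENNReal.toReal_mul, hBr1, hBr0]
  rw [htr, hF₁ _ hsx₁, hF₂ _ hsx₂]
  -- convert rpow to pow
  have hrp : ∀ (a : ℝ) (n : ℕ), 0 ≤ a → a ^ (-(n : ℝ)) = (a ^ n)⁻¹ := fun a n ha => by
    rw [Real.rpow_neg ha, Real.rpow_natCast]
  have h2 : ((-2 : ℝ)) = -((2 : ℕ) : ℝ) := by norm_num
  have h3 : ((-3 : ℝ)) = -((3 : ℕ) : ℝ) := by norm_num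
  have h4 : ((-4 : ℝ)) = -((4 : ℕ) : ℝ) := by norm_num
  have hts : t ^ (-(1 / 2) : ℝ) = s⁻¹ := by
    rw [Real.rpow_neg ht0.le, hsdef]
  have hsx₁0 : (0:ℝ) < s * x₁ := mul_pos hs0 hx₁
  have hsx₂0 : (0:ℝ) < s * x₂ := mul_pos hs0 hx₂
  rw [h2, h3, h4, hrp _ 2 hsx₁0.le, hrp _ 2 hsx₂0.le, hrp _ 2 hx₁.le, hrp _ 2 hx₂.le,
    hrp _ 3 hx₁.le, hrp _ 3 hx₂.le, hrp _ 4 hx₂.le, hts, ← hs2]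
  have hx₁0 : x₁ ≠ 0 := hx₁.ne'
  have hx₂0 : x₂ ≠ 0 := hx₂.ne'
  have hs0' : s ≠ 0 := hs0.ne'
  field_simp
  ring
end

section
/- In the same axis-supported mixture model (with F̄₁(x) = ½x^{-2}(1+x^{-1}), F̄₂(x) = x^{-2}(1−½x^{-1}+½x^{-2})), for every x > 0: lim_{t→∞} [t·P((X₁+X₂)/t^{1/2} > x) − (3/4)x^{-2}] / t^{-1/2} = 0. In particular, the second-order limit for the sum degenerates to zero although the joint vector is second-order multivariate regularly varying with nonzero limit function H(x₁,x₂) = ¼(x₁^{-3} − x₂^{-3}). -/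
open Filter Real MeasureTheory ProbabilityTheory

private theorem mixture_key {Ω : Type*} [MeasurableSpace Ω] (μ : Measure Ω) [IsProbabilityMeasure μ]
    (B Z₁ Z₂ : Ω → ℝ) (hB : Measurable B) (hZ₁ : Measurable Z₁) (hZ₂ : Measurable Z₂)
    (hindep : iIndepFun ![B, Z₁, Z₂] μ)
    (hB1 : μ {ω | B ω = 1} = 1 / 2) (hB0 : μ {ω | B ω = 0} = 1 / 2)
    (s : ℝ) :
    μ {ω | s < B ω * Z₁ ω + (1 - B ω) * Z₂ ω} =
      1/2 * μ {ω | s < Z₁ ω} + 1/2 * μ {ω | s < Z₂ ω} := by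
  have h01 : IndepFun B Z₁ μ := hindep.indepFun (show (0:Fin 3) ≠ 1 by decide)
  have h02 : IndepFun B Z₂ μ := hindep.indepFun (show (0:Fin 3) ≠ 2 by decide)
  set E := {ω | s < B ω * Z₁ ω + (1 - B ω) * Z₂ ω} with hEdef
  have hEm : MeasurableSet E := measurableSet_lt measurable_const
    ((hB.mul hZ₁).add ((measurable_const.sub hB).mul hZ₂))
  have hdisj : Disjoint (B ⁻¹' {1}) (B ⁻¹' {0}) := by
    intro u hu1 hu0 ω hω
    have h1 := hu1 hω; have h0 := hu0 hω
    simp only [Set.mem_preimage, Set.mem_singleton_iff] at h1 h0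
    exact one_ne_zero (h1 ▸ h0)
  have hm1 : MeasurableSet (B ⁻¹' {1}) := hB (measurableSet_singleton _)
  have hm0 : MeasurableSet (B ⁻¹' {0}) := hB (measurableSet_singleton _)
  have hS : μ (B ⁻¹' {1} ∪ B ⁻¹' {0}) = 1 := by
    rw [measure_union hdisj hm0]
    rw [show μ (B ⁻¹' {1}) = 1/2 from hB1, show μ (B ⁻¹' {0}) = 1/2 from hB0]
    rw [ENNReal.div_add_div_same, one_add_one_eq_two, ENNReal.div_self two_ne_zero ENNReal.ofNat_ne_top]
  have hSc : μ (B ⁻¹' {1} ∪ B ⁻¹' {0})ᶜ = 0 := by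
    rw [measure_compl (hm1.union hm0) (measure_ne_top _ _), hS, measure_univ, tsub_self]
  have hE : μ E = μ (E ∩ B ⁻¹' {1}) + μ (E ∩ B ⁻¹' {0}) := by
    rw [← measure_inter_conull hSc, Set.inter_union_distrib_left,
      measure_union (hdisj.mono Set.inter_subset_right Set.inter_subset_right)
        (hEm.inter hm0)]
  have hE1 : E ∩ B ⁻¹' {1} = B ⁻¹' {1} ∩ Z₁ ⁻¹' Set.Ioi s := by
    ext ω
    simp only [hEdef, Set.mem_inter_iff, Set.mem_setOf_eq, Set.mem_preimage,
      Set.mem_singleton_iff, Set.mem_Ioi]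
    constructor
    · rintro ⟨h, hb⟩; rw [hb] at h; constructor; exact hb; linarith
    · rintro ⟨hb, h⟩; refine ⟨?_, hb⟩; rw [hb]; ring_nf; linarith
  have hE0 : E ∩ B ⁻¹' {0} = B ⁻¹' {0} ∩ Z₂ ⁻¹' Set.Ioi s := by
    ext ω
    simp only [hEdef, Set.mem_inter_iff, Set.mem_setOf_eq, Set.mem_preimage,
      Set.mem_singleton_iff, Set.mem_Ioi]
    constructor
    · rintro ⟨h, hb⟩; rw [hb] at h; constructor; exact hb; linarith
    · rintro ⟨hb, h⟩; refine ⟨?_, hb⟩; rw [hb]; ring_nf; linarith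
  rw [hE, hE1, hE0,
    h01.measure_inter_preimage_eq_mul _ _ (measurableSet_singleton _) measurableSet_Ioi,
    h02.measure_inter_preimage_eq_mul _ _ (measurableSet_singleton _) measurableSet_Ioi,
    show μ (B ⁻¹' {1}) = 1/2 from hB1, show μ (B ⁻¹' {0}) = 1/2 from hB0]
  rfl

private theorem mixture_alg (x : ℝ) (hx : 0 < x) (t : ℝ) (ht1 : 1 ≤ t) :
    (t * (1/2 * ((1/2) * (t ^ (1/2:ℝ) * x) ^ (-2:ℝ) * (1 + (t ^ (1/2:ℝ) * x)⁻¹))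
        + 1/2 * ((t ^ (1/2:ℝ) * x) ^ (-2:ℝ) * (1 - (1/2) * (t ^ (1/2:ℝ) * x)⁻¹
            + (1/2) * (t ^ (1/2:ℝ) * x) ^ (-2:ℝ))))
      - (3/4) * x ^ (-2:ℝ)) / t ^ (-(1/2):ℝ)
      = (1/4) * (x^2)⁻¹ * (x^2)⁻¹ * (t ^ (1/2:ℝ))⁻¹ := by
  have ht0 : (0:ℝ) < t := by linarith
  have hr0 : (0:ℝ) < t ^ (1/2:ℝ) := Real.rpow_pos_of_pos ht0 _
  have hs0 : (0:ℝ) < t ^ (1/2:ℝ) * x := by positivity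
  have hsq : (t ^ (1/2:ℝ))^(2:ℕ) = t := by
    rw [← Real.rpow_natCast, ← Real.rpow_mul ht0.le]; norm_num
  rw [Real.rpow_neg hs0.le, Real.rpow_neg hx.le, Real.rpow_neg ht0.le,
    Real.rpow_two, Real.rpow_two]
  set u := t ^ (1/2:ℝ) with hu
  rw [← hsq]
  field_simp
  ring

/-- Axis-supported mixture model: first-order multivariate regular variation with
degeneracy of the second-order limit for the sum: the limit is zero
although the joint vector is second-order MRV with nonzero limit function. -/
theorem mixture_sum_degenerate {Ω : Type*} [MeasurableSpace Ω] (μ : Measure Ω) [IsProbabilityMeasure μ]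
    (B Z₁ Z₂ : Ω → ℝ) (hB : Measurable B) (hZ₁ : Measurable Z₁) (hZ₂ : Measurable Z₂)
    (hindep : iIndepFun ![B, Z₁, Z₂] μ)
    (hB1 : μ {ω | B ω = 1} = 1 / 2) (hB0 : μ {ω | B ω = 0} = 1 / 2)
    (hF₁ : ∀ x : ℝ, 1 ≤ x →
      (μ {ω | x < Z₁ ω}).toReal = (1 / 2) * x ^ (-2 : ℝ) * (1 + x⁻¹))
    (hF₂ : ∀ x : ℝ, 1 ≤ x →
      (μ {ω | x < Z₂ ω}).toReal = x ^ (-2 : ℝ) * (1 - (1 / 2) * x⁻¹ + (1 / 2) * x ^ (-2 : ℝ)))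
    (X₁ X₂ : Ω → ℝ) (hX₁ : X₁ = fun ω => B ω * Z₁ ω) (hX₂ : X₂ = fun ω => (1 - B ω) * Z₂ ω)
    (x : ℝ) (hx : 0 < x) :
    Tendsto (fun t : ℝ =>
        (t * (μ {ω | t ^ (1 / 2 : ℝ) * x < X₁ ω + X₂ ω}).toReal
          - (3 / 4) * x ^ (-2 : ℝ)) / t ^ (-(1 / 2) : ℝ))
      atTop (nhds 0) := by
  have hlim : Tendsto (fun t : ℝ => (1/4:ℝ) * (x^2)⁻¹ * (x^2)⁻¹ * (t ^ (1/2:ℝ))⁻¹)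
      atTop (nhds 0) := by
    have h1 : Tendsto (fun t : ℝ => (t ^ (1/2:ℝ))⁻¹) atTop (nhds 0) :=
      (tendsto_rpow_atTop (by norm_num)).inv_tendsto_atTop
    simpa using h1.const_mul ((1/4:ℝ) * (x^2)⁻¹ * (x^2)⁻¹)
  refine Tendsto.congr' ?_ hlim
  filter_upwards [eventually_ge_atTop (1:ℝ), eventually_ge_atTop (x ^ (-2:ℝ))]
    with t ht1 htx
  have ht0 : (0:ℝ) < t := by linarith
  set s := t ^ (1/2:ℝ) * x with hs
  have hs1 : (1:ℝ) ≤ s := by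
    have h1 : (x ^ (-2:ℝ)) ^ (1/2:ℝ) ≤ t ^ (1/2:ℝ) :=
      Real.rpow_le_rpow (by positivity) htx (by norm_num)
    have h2 : (x ^ (-2:ℝ)) ^ (1/2:ℝ) = x⁻¹ := by
      rw [← Real.rpow_mul hx.le]; norm_num; exact Real.rpow_neg_one x
    rw [h2] at h1
    have := mul_le_mul_of_nonneg_right h1 hx.le
    rwa [inv_mul_cancel₀ hx.ne'] at this
  have hμ : μ {ω | s < X₁ ω + X₂ ω} = 1/2 * μ {ω | s < Z₁ ω} + 1/2 * μ {ω | s < Z₂ ω} := by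
    rw [hX₁, hX₂]
    exact mixture_key μ B Z₁ Z₂ hB hZ₁ hZ₂ hindep hB1 hB0 s
  have htr : (μ {ω | s < X₁ ω + X₂ ω}).toReal
      = 1/2 * (μ {ω | s < Z₁ ω}).toReal + 1/2 * (μ {ω | s < Z₂ ω}).toReal := by
    rw [hμ, ENNReal.toReal_add (ENNReal.mul_ne_top (by norm_num) (measure_ne_top _ _))
      (ENNReal.mul_ne_top (by norm_num) (measure_ne_top _ _)),
      ENNReal.toReal_mul, ENNReal.toReal_mul]
    norm_num
  rw [htr, hF₁ s hs1, hF₂ s hs1, hs]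
  exact (mixture_alg x hx t ht1).symm
end

section
/- Let X₁,…,X_d be i.i.d. nonnegative with continuous distribution F such that F̄ ∈ RV_{-α}, α > 0. Then lim_{β↑1} VaR_β(S_d) / (d · VaR_β(X₁)) = d^{1/α − 1}, where S_d = X₁ + ⋯ + X_d and VaR_β(X) = inf{y : P(X ≤ y) ≥ β}. -/
open Filter Real MeasureTheory ProbabilityTheory Topology

set_option maxHeartbeats 2000000

/-- Value-at-risk at level β : the left-continuous β-quantile. -/
noncomputable def VaR {Ω : Type*} [MeasurableSpace Ω] (μ : Measure Ω) (X : Ω → ℝ) (β : ℝ) : ℝ :=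
  sInf {y : ℝ | β ≤ (μ {ω | X ω ≤ y}).toReal}

section Helpers

lemma probInterp {Ω : Type*} [MeasurableSpace Ω] (μ : Measure Ω) [IsProbabilityMeasure μ]
    {s : Set Ω} (hs : MeasurableSet s) : (μ s).toReal + (μ sᶜ).toReal = 1 := by
  have h := measure_add_measure_compl (μ := μ) hs
  have := ENNReal.toReal_add (measure_ne_top μ s) (measure_ne_top μ sᶜ)
  rw [← this] at *
  rw [h]
  simp

lemma cdf_compl {Ω : Type*} [MeasurableSpace Ω] (μ : Measure Ω) [IsProbabilityMeasure μ]
    (W : Ω → ℝ) (hW : Measurable W) (t : ℝ) :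
    (μ {ω | W ω ≤ t}).toReal + (μ {ω | t < W ω}).toReal = 1 := by
  have h : {ω | t < W ω} = {ω | W ω ≤ t}ᶜ := by ext ω; simp
  rw [h]
  exact probInterp μ (hW measurableSet_Iic)

lemma tendsto_tail_zero {Ω : Type*} [MeasurableSpace Ω] (μ : Measure Ω) [IsProbabilityMeasure μ]
    (W : Ω → ℝ) (hW : Measurable W) :
    Tendsto (fun t : ℝ => (μ {ω | t < W ω}).toReal) atTop (𝓝 0) := by
  set ν := μ.map W with hν
  have : IsProbabilityMeasure ν := Measure.isProbabilityMeasure_map hW.aemeasurable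
  have h1 : Tendsto (fun t : ℝ => (ν (Set.Iic t)).toReal) atTop (𝓝 1) := by
    have := MeasureTheory.tendsto_measure_Iic_atTop (μ := ν)
    have h2 := (ENNReal.tendsto_toReal (measure_ne_top ν Set.univ)).comp this
    simpa [Function.comp_def] using h2
  have heq : ∀ t : ℝ, (μ {ω | t < W ω}).toReal = 1 - (ν (Set.Iic t)).toReal := by
    intro t
    have hm : μ {ω | W ω ≤ t} = ν (Set.Iic t) := by
      rw [hν, Measure.map_apply hW measurableSet_Iic]; rfl
    have := cdf_compl μ W hW t
    rw [hm] at this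
    linarith
  simp only [heq]
  have := tendsto_const_nhds (x := (1:ℝ)) (f := atTop (α := ℝ)) |>.sub h1
  simpa using this

lemma cdf_tendsto_one {Ω : Type*} [MeasurableSpace Ω] (μ : Measure Ω) [IsProbabilityMeasure μ]
    (W : Ω → ℝ) (hW : Measurable W) :
    Tendsto (fun t : ℝ => (μ {ω | W ω ≤ t}).toReal) atTop (𝓝 1) := by
  have h := tendsto_const_nhds (x := (1:ℝ)) (f := atTop (α := ℝ)) |>.sub
    (tendsto_tail_zero μ W hW)
  rw [show (1:ℝ) - 0 = 1 by ring] at h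
  refine h.congr (fun t => ?_)
  have := cdf_compl μ W hW t
  linarith

lemma cdf_mono {Ω : Type*} [MeasurableSpace Ω] (μ : Measure Ω) [IsFiniteMeasure μ]
    (W : Ω → ℝ) : Monotone (fun t : ℝ => (μ {ω | W ω ≤ t}).toReal) := by
  intro y z hyz
  exact ENNReal.toReal_mono (measure_ne_top _ _)
    (measure_mono (fun ω hω => le_trans hω hyz))

lemma tail_anti {Ω : Type*} [MeasurableSpace Ω] (μ : Measure Ω) [IsFiniteMeasure μ]
    (W : Ω → ℝ) : Antitone (fun t : ℝ => (μ {ω | t < W ω}).toReal) := by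
  intro y z hyz
  exact ENNReal.toReal_mono (measure_ne_top _ _)
    (measure_mono (fun ω hω => lt_of_le_of_lt hyz hω))

end Helpers

section VaRlemmas

lemma VaR_le {Ω : Type*} [MeasurableSpace Ω] {μ : Measure Ω} {W : Ω → ℝ} {β y : ℝ}
    (hβ : 0 < β) (hWpos : ∀ ω, 0 ≤ W ω) (h : β ≤ (μ {ω | W ω ≤ y}).toReal) :
    VaR μ W β ≤ y := by
  refine csInf_le ⟨0, fun z hz => ?_⟩ h
  by_contra hz0
  push_neg at hz0
  have hempty : {ω | W ω ≤ z} = ∅ := by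
    ext ω; simp only [Set.mem_setOf_eq, Set.mem_empty_iff_false, iff_false, not_le]
    exact lt_of_lt_of_le hz0 (hWpos ω)
  have : β ≤ (μ {ω | W ω ≤ z}).toReal := hz
  rw [hempty] at this
  simp at this
  linarith

lemma VaR_set_nonempty {Ω : Type*} [MeasurableSpace Ω] {μ : Measure Ω} [IsProbabilityMeasure μ]
    {W : Ω → ℝ} (hW : Measurable W) {β : ℝ} (hβ1 : β < 1) :
    {y : ℝ | β ≤ (μ {ω | W ω ≤ y}).toReal}.Nonempty := by
  rcases ((cdf_tendsto_one μ W hW).eventually_const_lt hβ1).exists with ⟨y, hy⟩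
  exact ⟨y, le_of_lt hy⟩

lemma le_VaR {Ω : Type*} [MeasurableSpace Ω] {μ : Measure Ω} [IsProbabilityMeasure μ]
    {W : Ω → ℝ} (hW : Measurable W) {β y0 : ℝ} (hβ1 : β < 1)
    (hlt : (μ {ω | W ω ≤ y0}).toReal < β) : y0 ≤ VaR μ W β := by
  refine le_csInf (VaR_set_nonempty hW hβ1) (fun z hz => ?_)
  by_contra h
  push_neg at h
  have hmono : (μ {ω | W ω ≤ z}).toReal ≤ (μ {ω | W ω ≤ y0}).toReal :=
    cdf_mono μ W (le_of_lt h)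
  exact absurd hz (not_le.2 (lt_of_le_of_lt hmono hlt))

lemma exists_lt_VaR {Ω : Type*} [MeasurableSpace Ω] {μ : Measure Ω} [IsProbabilityMeasure μ]
    {W : Ω → ℝ} (hW : Measurable W) {β y : ℝ} (hβ1 : β < 1) (h : VaR μ W β < y) :
    ∃ z, β ≤ (μ {ω | W ω ≤ z}).toReal ∧ z < y := by
  obtain ⟨z, hz, hzy⟩ := exists_lt_of_csInf_lt (VaR_set_nonempty hW hβ1) h
  exact ⟨z, hz, hzy⟩

lemma cdf_VaR_eq {Ω : Type*} [MeasurableSpace Ω] {μ : Measure Ω} [IsProbabilityMeasure μ]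
    {W : Ω → ℝ} (hW : Measurable W) (hWpos : ∀ ω, 0 ≤ W ω) {β : ℝ}
    (hβ0 : 0 < β) (hβ1 : β < 1)
    (hcont : Continuous fun y : ℝ => (μ {ω | W ω ≤ y}).toReal) :
    (μ {ω | W ω ≤ VaR μ W β}).toReal = β := by
  have hbdd : BddBelow {y : ℝ | β ≤ (μ {ω | W ω ≤ y}).toReal} := by
    refine ⟨0, fun z hz => ?_⟩
    by_contra hz0
    push_neg at hz0
    have hempty : {ω | W ω ≤ z} = ∅ := by
      ext ω; simp only [Set.mem_setOf_eq, Set.mem_empty_iff_false, iff_false, not_le]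
      exact lt_of_lt_of_le hz0 (hWpos ω)
    have : β ≤ (μ {ω | W ω ≤ z}).toReal := hz
    rw [hempty] at this
    simp at this
    linarith
  have hne := VaR_set_nonempty (μ := μ) hW hβ1
  have hcl : IsClosed {y : ℝ | β ≤ (μ {ω | W ω ≤ y}).toReal} :=
    isClosed_le continuous_const hcont
  have hmem := hcl.csInf_mem hne hbdd
  have hge : β ≤ (μ {ω | W ω ≤ VaR μ W β}).toReal := hmem
  refine le_antisymm ?_ hge
  by_contra hgt
  push_neg at hgt
  have hev : ∀ᶠ y in 𝓝 (VaR μ W β), β < (μ {ω | W ω ≤ y}).toReal :=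
    hcont.continuousAt.eventually_const_lt hgt
  rcases Metric.eventually_nhds_iff.1 hev with ⟨η, hη, hball⟩
  have hmem2 : VaR μ W β - η / 2 ∈ {y : ℝ | β ≤ (μ {ω | W ω ≤ y}).toReal} := by
    refine le_of_lt (hball ?_)
    rw [Real.dist_eq, show VaR μ W β - η / 2 - VaR μ W β = -(η / 2) by ring, abs_neg,
      abs_of_nonneg (by linarith)]
    linarith
  have := csInf_le hbdd hmem2
  simp only [VaR] at this
  linarith

end VaRlemmas

lemma two_tail {Ω : Type*} [MeasurableSpace Ω] (μ : Measure Ω) [IsProbabilityMeasure μ]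
    (α a : ℝ) (hα : 0 < α) (ha : 0 < a) (X Y : Ω → ℝ)
    (hX : Measurable X) (hY : Measurable Y) (hXY : IndepFun X Y μ)
    (hXpos : ∀ ω, 0 ≤ X ω) (hYpos : ∀ ω, 0 ≤ Y ω)
    (GXpos : ∀ t : ℝ, 0 < (μ {ω | t < X ω}).toReal)
    (hRV : ∀ x : ℝ, 0 < x → Tendsto (fun t : ℝ =>
        (μ {ω | t * x < X ω}).toReal / (μ {ω | t < X ω}).toReal) atTop (𝓝 (x ^ (-α))))
    (hratio : Tendsto (fun t : ℝ =>
        (μ {ω | t < Y ω}).toReal / (μ {ω | t < X ω}).toReal) atTop (𝓝 a)) :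
    Tendsto (fun t : ℝ =>
        (μ {ω | t < X ω + Y ω}).toReal / (μ {ω | t < X ω}).toReal) atTop (𝓝 (1 + a)) := by
  classical
  set GX : ℝ → ℝ := fun t => (μ {ω | t < X ω}).toReal with hGX
  set GY : ℝ → ℝ := fun t => (μ {ω | t < Y ω}).toReal with hGY
  set H : ℝ → ℝ := fun t => (μ {ω | t < X ω + Y ω}).toReal with hH
  have hGXne : ∀ t, GX t ≠ 0 := fun t => ne_of_gt (GXpos t)
  -- preimage identities
  have hXpre : ∀ t : ℝ, {ω | t < X ω} = X ⁻¹' (Set.Ioi t) := fun t => rfl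
  have hYpre : ∀ t : ℝ, {ω | t < Y ω} = Y ⁻¹' (Set.Ioi t) := fun t => rfl
  -- independence product formula
  have hprod : ∀ s t : ℝ, μ ({ω | s < X ω} ∩ {ω | t < Y ω})
      = μ {ω | s < X ω} * μ {ω | t < Y ω} := by
    intro s t
    exact hXY.measure_inter_preimage_eq_mul _ _ measurableSet_Ioi measurableSet_Ioi
  -- lower bound
  have fact1 : ∀ t : ℝ, GX t + GY t - GX t * GY t ≤ H t := by
    intro t
    have hsub : {ω | t < X ω} ∪ {ω | t < Y ω} ⊆ {ω | t < X ω + Y ω} := by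
      rintro ω (h | h)
      · exact lt_of_lt_of_le h (le_add_of_nonneg_right (hYpos ω))
      · exact lt_of_lt_of_le h (le_add_of_nonneg_left (hXpos ω))
    have hui : μ ({ω | t < X ω} ∪ {ω | t < Y ω}) + μ ({ω | t < X ω} ∩ {ω | t < Y ω})
        = μ {ω | t < X ω} + μ {ω | t < Y ω} := measure_union_add_inter _ (hY measurableSet_Ioi)
    have h1 : (μ ({ω | t < X ω} ∪ {ω | t < Y ω})).toReal
        + (μ ({ω | t < X ω} ∩ {ω | t < Y ω})).toReal = GX t + GY t := by
      rw [← ENNReal.toReal_add (measure_ne_top _ _) (measure_ne_top _ _), hui,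
        ENNReal.toReal_add (measure_ne_top _ _) (measure_ne_top _ _)]
    have h2 : (μ ({ω | t < X ω} ∩ {ω | t < Y ω})).toReal = GX t * GY t := by
      rw [hprod, ENNReal.toReal_mul]
    have h3 : (μ ({ω | t < X ω} ∪ {ω | t < Y ω})).toReal ≤ H t :=
      ENNReal.toReal_mono (measure_ne_top _ _) (measure_mono hsub)
    linarith
  -- upper bound
  have fact2 : ∀ δ : ℝ, 0 < δ → δ < 1 → ∀ t : ℝ,
      H t ≤ GX (t * (1 - δ)) + GY (t * (1 - δ)) + GX (t * δ) * GY (t * δ) := by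
    intro δ hδ0 hδ1 t
    have hsub : {ω | t < X ω + Y ω} ⊆
        ({ω | t * (1 - δ) < X ω} ∪ {ω | t * (1 - δ) < Y ω}) ∪
          ({ω | t * δ < X ω} ∩ {ω | t * δ < Y ω}) := by
      intro ω hω
      simp only [Set.mem_setOf_eq] at hω
      by_cases h1 : t * (1 - δ) < X ω
      · exact Or.inl (Or.inl h1)
      by_cases h2 : t * (1 - δ) < Y ω
      · exact Or.inl (Or.inr h2)
      push_neg at h1 h2
      have hexp : t * (1 - δ) = t - t * δ := by ring
      exact Or.inr ⟨show t * δ < X ω by linarith, show t * δ < Y ω by linarith⟩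
    have hle : μ {ω | t < X ω + Y ω} ≤
        μ {ω | t * (1 - δ) < X ω} + μ {ω | t * (1 - δ) < Y ω}
          + μ ({ω | t * δ < X ω} ∩ {ω | t * δ < Y ω}) := by
      refine (measure_mono hsub).trans ?_
      refine (measure_union_le _ _).trans ?_
      gcongr
      exact measure_union_le _ _
    have h4 : (μ {ω | t < X ω + Y ω}).toReal ≤
        (μ {ω | t * (1 - δ) < X ω} + μ {ω | t * (1 - δ) < Y ω}
          + μ ({ω | t * δ < X ω} ∩ {ω | t * δ < Y ω})).toReal := by
      refine ENNReal.toReal_mono ?_ hle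
      exact ENNReal.add_ne_top.2 ⟨ENNReal.add_ne_top.2 ⟨measure_ne_top _ _, measure_ne_top _ _⟩,
        measure_ne_top _ _⟩
    rw [ENNReal.toReal_add (ENNReal.add_ne_top.2 ⟨measure_ne_top _ _, measure_ne_top _ _⟩)
        (measure_ne_top _ _),
      ENNReal.toReal_add (measure_ne_top _ _) (measure_ne_top _ _), hprod,
      ENNReal.toReal_mul] at h4
    exact h4
  -- main epsilon argument
  rw [Metric.tendsto_nhds]
  intro ε hε
  -- choose δ
  have hcont : ContinuousAt (fun δ : ℝ => (1 + a) * (1 - δ) ^ (-α)) 0 := by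
    have h1 : ContinuousAt (fun δ : ℝ => (1 : ℝ) - δ) 0 := by fun_prop
    have h2 : ContinuousAt (fun x : ℝ => x ^ (-α)) ((1:ℝ) - 0) := by
      apply Real.continuousAt_rpow_const
      left; norm_num
    exact continuousAt_const.mul (h2.comp h1)
  have hval : (fun δ : ℝ => (1 + a) * (1 - δ) ^ (-α)) 0 = 1 + a := by
    simp [Real.one_rpow]
  have hlim : Tendsto (fun δ : ℝ => (1 + a) * (1 - δ) ^ (-α)) (𝓝 0) (𝓝 (1 + a)) := by
    simpa [hval] using hcont.tendsto
  have hev : ∀ᶠ δ in 𝓝[>] (0:ℝ), (1 + a) * (1 - δ) ^ (-α) < 1 + a + ε / 2 :=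
    (hlim.mono_left nhdsWithin_le_nhds).eventually_lt_const (by linarith)
  have hIoo : Set.Ioo (0:ℝ) 1 ∈ 𝓝[>] (0:ℝ) := Ioo_mem_nhdsGT_of_mem ⟨le_refl _, one_pos⟩
  obtain ⟨δ, hδbd, hδ0, hδ1⟩ : ∃ δ : ℝ, (1 + a) * (1 - δ) ^ (-α) < 1 + a + ε / 2
      ∧ 0 < δ ∧ δ < 1 := by
    rcases (hev.and (eventually_of_mem hIoo (fun x hx => hx))).exists with ⟨δ, h1, h2, h3⟩
    exact ⟨δ, h1, h2, h3⟩
  have h1δ : (0:ℝ) < 1 - δ := by linarith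
  have hmul1 : Tendsto (fun t : ℝ => t * (1 - δ)) atTop atTop :=
    tendsto_id.atTop_mul_const h1δ
  have hmulδ : Tendsto (fun t : ℝ => t * δ) atTop atTop :=
    tendsto_id.atTop_mul_const hδ0
  -- upper quotient tendsto
  have T1 : Tendsto (fun t : ℝ => GX (t * (1 - δ)) / GX t) atTop (𝓝 ((1 - δ) ^ (-α))) :=
    hRV _ h1δ
  have Tr : Tendsto (fun t : ℝ => GY (t * (1 - δ)) / GX (t * (1 - δ))) atTop (𝓝 a) :=
    hratio.comp hmul1
  have T2 : Tendsto (fun t : ℝ => GY (t * (1 - δ)) / GX t) atTop (𝓝 (a * (1 - δ) ^ (-α))) := by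
    have := Tr.mul T1
    refine this.congr (fun t => ?_)
    rw [div_mul_div_comm, mul_comm (GY _) (GX _), mul_div_mul_left _ _ (hGXne _)]
  have T3 : Tendsto (fun t : ℝ => GX (t * δ) * GY (t * δ) / GX t)
      atTop (𝓝 0) := by
    have hz : Tendsto (fun t : ℝ => GX (t * δ)) atTop (𝓝 0) :=
      (tendsto_tail_zero μ X hX).comp hmulδ
    have hry : Tendsto (fun t : ℝ => GY (t * δ) / GX (t * δ)) atTop (𝓝 a) :=
      hratio.comp hmulδ
    have hrx : Tendsto (fun t : ℝ => GX (t * δ) / GX t) atTop (𝓝 (δ ^ (-α))) := hRV _ hδ0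
    have := (hz.mul hry).mul hrx
    rw [show (0:ℝ) * a * δ ^ (-α) = 0 by ring] at this
    refine this.congr (fun t => ?_)
    have hb := hGXne (t * δ)
    field_simp
  have TU : Tendsto (fun t : ℝ =>
      (GX (t * (1 - δ)) + GY (t * (1 - δ)) + GX (t * δ) * GY (t * δ)) / GX t)
      atTop (𝓝 ((1 + a) * (1 - δ) ^ (-α))) := by
    have := (T1.add T2).add T3
    rw [show (1 - δ) ^ (-α) + a * (1 - δ) ^ (-α) + 0 = (1 + a) * (1 - δ) ^ (-α) by ring] at this
    refine this.congr (fun t => ?_)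
    rw [add_div, add_div]
  have TL : Tendsto (fun t : ℝ => (GX t + GY t - GX t * GY t) / GX t)
      atTop (𝓝 (1 + a)) := by
    have hGY0 : Tendsto GY atTop (𝓝 0) := tendsto_tail_zero μ Y hY
    have := (tendsto_const_nhds (x := (1:ℝ)) (f := atTop)).add hratio |>.sub hGY0
    rw [show (1:ℝ) + a - 0 = 1 + a by ring] at this
    refine this.congr (fun t => ?_)
    have hb := hGXne t
    change 1 + GY t / GX t - GY t = _
    rw [eq_div_iff hb, sub_mul, add_mul, div_mul_cancel₀ _ hb]; ring
  have EU := TU.eventually_lt_const (show (1 + a) * (1 - δ) ^ (-α) < 1 + a + ε by linarith)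
  have EL := TL.eventually_const_lt (show 1 + a - ε < 1 + a by linarith)
  filter_upwards [EU, EL] with t hU hL
  rw [Real.dist_eq, abs_lt]
  have hup : H t / GX t ≤ (GX (t * (1 - δ)) + GY (t * (1 - δ)) + GX (t * δ) * GY (t * δ)) / GX t :=
    (div_le_div_iff_of_pos_right (GXpos t)).2 (fact2 δ hδ0 hδ1 t)
  have hlo : (GX t + GY t - GX t * GY t) / GX t ≤ H t / GX t :=
    (div_le_div_iff_of_pos_right (GXpos t)).2 (fact1 t)
  constructor <;> linarith

/-- For iid nonnegative risks with a common continuous distribution having a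
regularly varying tail of index −α, VaR_β(S_d)/(d·VaR_β(X₁)) → d^{1/α−1} as β ↑ 1. -/
theorem divIndex_iid_RV {Ω : Type*} [MeasurableSpace Ω] (μ : Measure Ω) [IsProbabilityMeasure μ]
    (α : ℝ) (hα : 0 < α) (d : ℕ) [NeZero d] (hd : 1 ≤ d)
    (X : Fin d → Ω → ℝ) (hm : ∀ i, Measurable (X i))
    (hindep : iIndepFun X μ)
    (hident : ∀ i, Measure.map (X i) μ = Measure.map (X 0) μ)
    (hpos : ∀ i ω, 0 ≤ X i ω)
    (hcont : Continuous fun x : ℝ => (μ {ω | X 0 ω ≤ x}).toReal)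
    (hRV : ∀ x : ℝ, 0 < x →
      Tendsto (fun t : ℝ => (μ {ω | t * x < X 0 ω}).toReal / (μ {ω | t < X 0 ω}).toReal)
        atTop (nhds (x ^ (-α)))) :
    Tendsto (fun β : ℝ =>
        VaR μ (fun ω => ∑ i, X i ω) β / (d * VaR μ (X 0) β))
      (𝓝[<] 1) (nhds ((d : ℝ) ^ (1 / α - 1))) := by
  classical
  have hd0 : (0:ℝ) < d := by exact_mod_cast Nat.pos_of_ne_zero (NeZero.ne d)
  have hd1R : (1:ℝ) ≤ d := by exact_mod_cast hd
  have hαne : α ≠ 0 := ne_of_gt hα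
  -- identical tails
  have htail : ∀ (i : Fin d) (t : ℝ), μ {ω | t < X i ω} = μ {ω | t < X 0 ω} := by
    intro i t
    have h1 : μ {ω | t < X i ω} = (μ.map (X i)) (Set.Ioi t) := by
      rw [Measure.map_apply (hm i) measurableSet_Ioi]; rfl
    have h2 : μ {ω | t < X 0 ω} = (μ.map (X 0)) (Set.Ioi t) := by
      rw [Measure.map_apply (hm 0) measurableSet_Ioi]; rfl
    rw [h1, h2, hident i]
  -- positivity of the tail of X 0
  have hGpos : ∀ t : ℝ, 0 < (μ {ω | t < X 0 ω}).toReal := by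
    intro t
    by_contra h
    push_neg at h
    have h0 : μ {ω | t < X 0 ω} = 0 := by
      have h1 : (μ {ω | t < X 0 ω}).toReal = 0 := le_antisymm h ENNReal.toReal_nonneg
      rcases (ENNReal.toReal_eq_zero_iff _).1 h1 with h2 | h2
      · exact h2
      · exact absurd h2 (measure_ne_top μ _)
    have hev : ∀ᶠ t' in (atTop : Filter ℝ),
        (μ {ω | t' * 2 < X 0 ω}).toReal / (μ {ω | t' < X 0 ω}).toReal = 0 := by
      filter_upwards [eventually_ge_atTop (max t 0)] with t' ht'
      have hta : t ≤ t' := le_trans (le_max_left t 0) ht'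
      have htb : (0:ℝ) ≤ t' := le_trans (le_max_right t 0) ht'
      have h1 : μ {ω | t' * 2 < X 0 ω} = 0 := by
        refine measure_mono_null (fun ω hω => ?_) h0
        simp only [Set.mem_setOf_eq] at *
        linarith
      simp [h1]
    have h2 : Tendsto (fun _ : ℝ => (0:ℝ)) atTop (𝓝 ((2:ℝ) ^ (-α))) :=
      (hRV 2 two_pos).congr' (by filter_upwards [hev] with t' ht'; exact ht')
    have h3 : ((2:ℝ) ^ (-α)) = 0 := (tendsto_nhds_unique tendsto_const_nhds h2).symm
    have : (0:ℝ) < 2 ^ (-α) := Real.rpow_pos_of_pos two_pos _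
    linarith
  -- sums over finsets
  have hsum : ∀ s : Finset (Fin d), s.Nonempty →
      Tendsto (fun t : ℝ => (μ {ω | t < ∑ i ∈ s, X i ω}).toReal /
        (μ {ω | t < X 0 ω}).toReal) atTop (𝓝 (s.card : ℝ)) := by
    intro s
    induction s using Finset.induction_on with
    | empty => intro h; simp at h
    | @insert j s hj ih =>
      intro _
      by_cases hs : s.Nonempty
      · have ha0 : (0:ℝ) < s.card := by exact_mod_cast Finset.card_pos.2 hs
        have hYm : Measurable (fun ω => ∑ i ∈ s, X i ω) :=
          Finset.measurable_sum s (fun i _ => hm i)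
        have hind : IndepFun (X j) (fun ω => ∑ i ∈ s, X i ω) μ := by
          have h := (hindep.indepFun_finsetSum_of_notMem hm hj).symm
          have he : (∑ i ∈ s, X i) = fun ω => ∑ i ∈ s, X i ω := by
            funext ω; simp
          rwa [he] at h
        have hstep := two_tail μ α s.card hα ha0 (X j) (fun ω => ∑ i ∈ s, X i ω)
          (hm j) hYm hind (hpos j) (fun ω => Finset.sum_nonneg fun i _ => hpos i ω)
          (fun t => by rw [htail j]; exact hGpos t)
          (fun x hx => by simpa only [htail j] using hRV x hx)
          (by simpa only [htail j] using ih hs)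
        simp only [htail j] at hstep
        have hcard : ((insert j s).card : ℝ) = 1 + s.card := by
          rw [Finset.card_insert_of_notMem hj]; push_cast; ring
        rw [hcard]
        refine hstep.congr (fun t => ?_)
        rw [show {ω | t < ∑ i ∈ insert j s, X i ω} = {ω | t < X j ω + ∑ i ∈ s, X i ω} by
          ext ω; simp [Finset.sum_insert hj]]
      · have hse : s = ∅ := Finset.not_nonempty_iff_eq_empty.1 hs
        subst hse
        have heq : ∀ t : ℝ, (μ {ω | t < ∑ i ∈ insert j (∅ : Finset (Fin d)), X i ω}).toReal /
            (μ {ω | t < X 0 ω}).toReal = 1 := by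
          intro t
          have hsimp : {ω | t < ∑ i ∈ insert j (∅ : Finset (Fin d)), X i ω}
              = {ω | t < X j ω} := by ext ω; simp
          rw [hsimp, htail j, div_self (ne_of_gt (hGpos t))]
        rw [show (((insert j (∅ : Finset (Fin d))).card : ℕ) : ℝ) = 1 by simp]
        exact tendsto_const_nhds.congr (fun t => (heq t).symm)
  have hneFin : Nonempty (Fin d) := Fin.pos_iff_nonempty.1 (Nat.pos_of_ne_zero (NeZero.ne d))
  have hH : Tendsto (fun t : ℝ => (μ {ω | t < ∑ i, X i ω}).toReal /
      (μ {ω | t < X 0 ω}).toReal) atTop (𝓝 (d : ℝ)) := by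
    have := hsum Finset.univ Finset.univ_nonempty
    simpa using this
  -- cdf facts
  have hmS : Measurable (fun ω => ∑ i, X i ω) := Finset.measurable_sum _ (fun i _ => hm i)
  have hSpos : ∀ ω, 0 ≤ ∑ i, X i ω := fun ω => Finset.sum_nonneg fun i _ => hpos i ω
  have hcdfX : ∀ y : ℝ, (μ {ω | X 0 ω ≤ y}).toReal + (μ {ω | y < X 0 ω}).toReal = 1 :=
    cdf_compl μ (X 0) (hm 0)
  have hcdfS : ∀ y : ℝ, (μ {ω | (∑ i, X i ω) ≤ y}).toReal
      + (μ {ω | y < ∑ i, X i ω}).toReal = 1 := cdf_compl μ (fun ω => ∑ i, X i ω) hmS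
  have hFXlt1 : ∀ y : ℝ, (μ {ω | X 0 ω ≤ y}).toReal < 1 := fun y => by
    have h1 := hcdfX y; have h2 := hGpos y; linarith
  set c : ℝ := (d : ℝ) ^ (1 / α) with hc
  clear_value c
  have hc0 : 0 < c := by rw [hc]; exact Real.rpow_pos_of_pos hd0 _
  have hc1 : 1 ≤ c := by
    rw [hc]
    calc (1:ℝ) = (d:ℝ) ^ (0:ℝ) := (Real.rpow_zero _).symm
      _ ≤ (d:ℝ) ^ (1/α) := Real.rpow_le_rpow_of_exponent_le hd1R (by positivity)
  have hcinv : c ^ (-α) = ((d:ℝ))⁻¹ := by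
    rw [hc, ← Real.rpow_mul hd0.le]
    rw [show (1/α) * (-α) = -1 by field_simp]
    exact Real.rpow_neg_one _
  have main : Tendsto (fun β : ℝ => VaR μ (fun ω => ∑ i, X i ω) β / VaR μ (X 0) β)
      (𝓝[<] 1) (𝓝 c) := by
    rw [Metric.tendsto_nhds]
    intro ε0 hε0
    set ε : ℝ := min (ε0 / (2 * c)) (1/4) with hεdef
    clear_value ε
    have hεpos : 0 < ε := by rw [hεdef]; exact lt_min (by positivity) (by norm_num)
    have hε14 : ε ≤ 1/4 := by rw [hεdef]; exact min_le_right _ _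
    have hεc : c * ε ≤ ε0 / 2 := by
      have h1 : ε ≤ ε0 / (2*c) := by rw [hεdef]; exact min_le_left _ _
      have h2 : c * ε ≤ c * (ε0/(2*c)) := mul_le_mul_of_nonneg_left h1 hc0.le
      have h3 : c * (ε0/(2*c)) = ε0/2 := by field_simp
      linarith
    have hcε1 : (0:ℝ) < c * (1 + ε) := mul_pos hc0 (by linarith only [hεpos])
    have hcε2 : (0:ℝ) < c * (1 - ε) := mul_pos hc0 (by linarith only [hε14])
    set A : ℝ := (c * (1 + ε)) ^ (-α) with hA
    set B : ℝ := (c * (1 - ε)) ^ (-α) with hB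
    clear_value A B
    have hApos : 0 < A := by rw [hA]; exact Real.rpow_pos_of_pos hcε1 _
    have hBpos : 0 < B := by rw [hB]; exact Real.rpow_pos_of_pos hcε2 _
    have hdA : (d:ℝ) * A = (1 + ε) ^ (-α) := by
      rw [hA, Real.mul_rpow hc0.le (by linarith : (0:ℝ) ≤ 1 + ε), hcinv]
      field_simp
    have hdB : (d:ℝ) * B = (1 - ε) ^ (-α) := by
      rw [hB, Real.mul_rpow hc0.le (by linarith : (0:ℝ) ≤ 1 - ε), hcinv]
      field_simp
    have hdA1 : (d:ℝ) * A < 1 := by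
      rw [hdA]; exact Real.rpow_lt_one_of_one_lt_of_neg (by linarith) (by linarith)
    have hdB1 : 1 < (d:ℝ) * B := by
      rw [hdB]
      exact (Real.one_lt_rpow_iff_of_pos (by linarith)).2 (Or.inr ⟨by linarith, by linarith⟩)
    obtain ⟨δ, hδ0, hδd, hδB, hKup, hKlo⟩ :
        ∃ δ : ℝ, 0 < δ ∧ δ < (d:ℝ) ∧ δ < B ∧ ((d:ℝ) + δ) * (A + δ) < 1
          ∧ 1 < ((d:ℝ) - δ) * (B - δ) := by
      have hfc : ContinuousAt (fun δ : ℝ => ((d:ℝ) + δ) * (A + δ)) 0 := by fun_prop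
      have hgc : ContinuousAt (fun δ : ℝ => ((d:ℝ) - δ) * (B - δ)) 0 := by fun_prop
      have hfl : Tendsto (fun δ : ℝ => ((d:ℝ) + δ) * (A + δ)) (𝓝 0) (𝓝 ((d:ℝ) * A)) := by
        simpa using hfc.tendsto
      have hgl : Tendsto (fun δ : ℝ => ((d:ℝ) - δ) * (B - δ)) (𝓝 0) (𝓝 ((d:ℝ) * B)) := by
        simpa using hgc.tendsto
      have h1 : ∀ᶠ δ in 𝓝[>] (0:ℝ), ((d:ℝ) + δ) * (A + δ) < 1 :=
        (hfl.mono_left nhdsWithin_le_nhds).eventually_lt_const hdA1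
      have h2 : ∀ᶠ δ in 𝓝[>] (0:ℝ), 1 < ((d:ℝ) - δ) * (B - δ) :=
        (hgl.mono_left nhdsWithin_le_nhds).eventually_const_lt hdB1
      have h3 : Set.Ioo (0:ℝ) (min (d:ℝ) B) ∈ 𝓝[>] (0:ℝ) :=
        Ioo_mem_nhdsGT_of_mem ⟨le_refl _, lt_min hd0 hBpos⟩
      rcases ((h1.and h2).and (eventually_of_mem h3 fun x hx => hx)).exists with
        ⟨δ, ⟨hf, hg⟩, hδm⟩
      exact ⟨δ, hδm.1, lt_of_lt_of_le hδm.2 (min_le_left _ _),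
        lt_of_lt_of_le hδm.2 (min_le_right _ _), hf, hg⟩
    have E1 : ∀ᶠ t in (atTop : Filter ℝ),
        dist ((μ {ω | t < ∑ i, X i ω}).toReal / (μ {ω | t < X 0 ω}).toReal) (d:ℝ) < δ :=
      Metric.tendsto_nhds.1 hH δ hδ0
    have E2 : ∀ᶠ t in (atTop : Filter ℝ),
        (μ {ω | t * (c * (1 + ε)) < X 0 ω}).toReal / (μ {ω | t < X 0 ω}).toReal < A + δ :=
      (hRV _ hcε1).eventually_lt_const (by linarith)
    have E3 : ∀ᶠ t in (atTop : Filter ℝ),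
        B - δ < (μ {ω | t * (c * (1 - ε)) < X 0 ω}).toReal / (μ {ω | t < X 0 ω}).toReal :=
      (hRV _ hcε2).eventually_const_lt (by linarith)
    rcases eventually_atTop.1 ((E1.and E2).and E3) with ⟨M0, hM0⟩
    set M : ℝ := max M0 0 with hMdef
    clear_value M
    have hM0le : M0 ≤ M := by rw [hMdef]; exact le_max_left _ _
    have hMnn : 0 ≤ M := by rw [hMdef]; exact le_max_right _ _
    set T0 : ℝ := max M (M / (c * (1 - ε))) + 1 with hT0def
    clear_value T0
    have hT0M : M ≤ T0 := by
      rw [hT0def]; linarith [le_max_left M (M / (c * (1 - ε)))]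
    have hT0M2 : M / (c * (1 - ε)) ≤ T0 := by
      rw [hT0def]; linarith [le_max_right M (M / (c * (1 - ε)))]
    have hT01 : 1 ≤ T0 := by
      rw [hT0def]; linarith [le_trans hMnn (le_max_left M (M / (c * (1 - ε))))]
    have hmemβ : Set.Ioo (max ((μ {ω | X 0 ω ≤ T0}).toReal) (1/2)) 1 ∈ 𝓝[<] (1:ℝ) :=
      Ioo_mem_nhdsLT_of_mem ⟨max_lt (hFXlt1 T0) (by norm_num), le_refl 1⟩
    filter_upwards [eventually_of_mem hmemβ (fun x hx => hx)] with β hβ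
    obtain ⟨hβlo, hβ1⟩ := hβ
    have hβhalf : 1/2 < β := lt_of_le_of_lt (le_max_right _ _) hβlo
    have hβF : (μ {ω | X 0 ω ≤ T0}).toReal < β := lt_of_le_of_lt (le_max_left _ _) hβlo
    have hβ0 : 0 < β := by linarith
    have h1β : 0 < 1 - β := by linarith
    obtain ⟨q, hqdef⟩ : ∃ r : ℝ, VaR μ (X 0) β = r := ⟨_, rfl⟩
    obtain ⟨qS, hqSdef⟩ : ∃ r : ℝ, VaR μ (fun ω => ∑ i, X i ω) β = r := ⟨_, rfl⟩
    rw [hqdef, hqSdef]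
    have hqT0 : T0 ≤ q := hqdef ▸ le_VaR (hm 0) hβ1 hβF
    have hq1 : 1 ≤ q := le_trans hT01 hqT0
    have hqpos : 0 < q := by linarith
    have hFq : (μ {ω | X 0 ω ≤ q}).toReal = β :=
      hqdef ▸ cdf_VaR_eq (hm 0) (hpos 0) hβ0 hβ1 hcont
    have hGq : (μ {ω | q < X 0 ω}).toReal = 1 - β := by have := hcdfX q; linarith
    have hqM : M ≤ q := le_trans hT0M hqT0
    -- upper claim
    have hup : qS ≤ q * (c * (1 + ε)) := by
      by_contra hgt
      push_neg at hgt
      set y : ℝ := q * (c * (1 + ε)) with hy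
      clear_value y
      have hc1ε : 1 ≤ c * (1 + ε) := by
        have h := mul_le_mul_of_nonneg_left (show (1:ℝ) ≤ 1 + ε by linarith only [hεpos])
          (le_trans zero_le_one hc1)
        rw [mul_one] at h
        linarith only [h, hc1]
      have hyq : q ≤ y := by
        have h := mul_le_mul_of_nonneg_left hc1ε hqpos.le
        rw [mul_one] at h
        rw [hy]; exact h
      have hyM : M ≤ y := le_trans hqM hyq
      have hFSy : (μ {ω | (∑ i, X i ω) ≤ y}).toReal < β := by
        by_contra hh
        push_neg at hh
        have hv := VaR_le (μ := μ) hβ0 hSpos hh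
        rw [hqSdef] at hv
        exact absurd hv (not_le.2 hgt)
      have hHSy : 1 - β < (μ {ω | y < ∑ i, X i ω}).toReal := by
        have := hcdfS y; linarith
      obtain ⟨⟨hE1y, _⟩, _⟩ := hM0 y (le_trans hM0le hyM)
      obtain ⟨⟨_, hE2q⟩, _⟩ := hM0 q (le_trans hM0le hqM)
      have hGy : 0 < (μ {ω | y < X 0 ω}).toReal := hGpos y
      have hHle : (μ {ω | y < ∑ i, X i ω}).toReal
          < ((d:ℝ) + δ) * (μ {ω | y < X 0 ω}).toReal := by
        rw [Real.dist_eq, abs_lt] at hE1y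
        have h2 := hE1y.2
        have h3 : (μ {ω | y < ∑ i, X i ω}).toReal / (μ {ω | y < X 0 ω}).toReal
            < (d:ℝ) + δ := by linarith
        exact (div_lt_iff₀ hGy).1 h3
      have hGyle : (μ {ω | y < X 0 ω}).toReal < (A + δ) * (1 - β) := by
        have h := (div_lt_iff₀ (hGpos q)).1 hE2q
        rw [hGq] at h
        rw [hy]
        exact h
      have hdd : (0:ℝ) < (d:ℝ) + δ := by positivity
      have hstep2 : ((d:ℝ) + δ) * (μ {ω | y < X 0 ω}).toReal
          < ((d:ℝ) + δ) * ((A + δ) * (1 - β)) := mul_lt_mul_of_pos_left hGyle hdd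
      have hKprod := mul_lt_mul_of_pos_right hKup h1β
      have hassoc : ((d:ℝ) + δ) * ((A + δ) * (1 - β)) = (((d:ℝ) + δ) * (A + δ)) * (1 - β) := by
        ring
      rw [one_mul] at hKprod
      linarith only [hHSy, hHle, hstep2, hassoc, hKprod]
    -- lower claim
    have hlo : q * (c * (1 - ε)) ≤ qS := by
      by_contra hgt
      push_neg at hgt
      set y : ℝ := q * (c * (1 - ε)) with hy
      clear_value y
      rw [← hqSdef] at hgt
      obtain ⟨z, hz, hzy⟩ := exists_lt_VaR hmS hβ1 hgt
      have hHSz : (μ {ω | z < ∑ i, X i ω}).toReal ≤ 1 - β := by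
        have := hcdfS z; linarith
      have hHSy : (μ {ω | y < ∑ i, X i ω}).toReal ≤ 1 - β :=
        le_trans (tail_anti μ (fun ω => ∑ i, X i ω) (le_of_lt hzy)) hHSz
      have hyM : M ≤ y := by
        have h2 : M / (c * (1 - ε)) ≤ q := le_trans hT0M2 hqT0
        rw [div_le_iff₀ hcε2] at h2
        rw [hy]; exact h2
      obtain ⟨⟨hE1y, _⟩, _⟩ := hM0 y (le_trans hM0le hyM)
      obtain ⟨_, hE3q⟩ := hM0 q (le_trans hM0le hqM)
      have hGyge : (B - δ) * (1 - β) < (μ {ω | y < X 0 ω}).toReal := by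
        have h := (lt_div_iff₀ (hGpos q)).1 hE3q
        rw [hGq] at h
        rw [hy]
        exact h
      have hHge : ((d:ℝ) - δ) * (μ {ω | y < X 0 ω}).toReal
          < (μ {ω | y < ∑ i, X i ω}).toReal := by
        rw [Real.dist_eq, abs_lt] at hE1y
        have h1 := hE1y.1
        have h3 : (d:ℝ) - δ < (μ {ω | y < ∑ i, X i ω}).toReal
            / (μ {ω | y < X 0 ω}).toReal := by linarith
        have := (lt_div_iff₀ (hGpos y)).1 h3
        linarith
      have hdd : (0:ℝ) < (d:ℝ) - δ := by linarith
      have hs2 : ((d:ℝ) - δ) * ((B - δ) * (1 - β))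
          < ((d:ℝ) - δ) * (μ {ω | y < X 0 ω}).toReal := mul_lt_mul_of_pos_left hGyge hdd
      have hKprod := mul_lt_mul_of_pos_right hKlo h1β
      have hassoc : ((d:ℝ) - δ) * ((B - δ) * (1 - β)) = (((d:ℝ) - δ) * (B - δ)) * (1 - β) := by
        ring
      rw [one_mul] at hKprod
      linarith only [hHSy, hHge, hs2, hassoc, hKprod]
    -- conclude
    rw [Real.dist_eq, abs_lt]
    have hdivup : qS / q ≤ c * (1 + ε) := by
      rw [div_le_iff₀ hqpos]
      linarith only [hup, show q * (c * (1 + ε)) = c * (1 + ε) * q from mul_comm _ _]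
    have hdivlo : c * (1 - ε) ≤ qS / q := by
      rw [le_div_iff₀ hqpos]
      linarith only [hlo, show q * (c * (1 - ε)) = c * (1 - ε) * q from mul_comm _ _]
    have he1 : c * (1 + ε) = c + c * ε := by ring
    have he2 : c * (1 - ε) = c - c * ε := by ring
    constructor
    · linarith only [hdivlo, hεc, hε0, he2]
    · linarith only [hdivup, hεc, hε0, he1]
  have hcd : c / (d:ℝ) = (d:ℝ) ^ (1/α - 1) := by
    rw [hc, Real.rpow_sub hd0, Real.rpow_one]
  rw [← hcd]
  have hfinal := main.div_const (d:ℝ)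
  refine hfinal.congr (fun β => ?_)
  rw [div_div, mul_comm]
end

section
/- Suppose z_t is a family of nonnegative nonincreasing functions on [0,∞), g has a negative continuous derivative, δ(t) → 0 with δ(t) > 0 eventually, and (z_t(x) − g(x))/δ(t) → y(x) locally uniformly on (0,∞) as t → ∞, where y is continuous. Then (z_t^←(x) − g^←(x))/δ(t) → −(g^←)'(x)·y(g^←(x)) locally uniformly on (g(0), g(∞)), where f^← denotes the generalized inverse. -/
open Filter Real Topology

/-- Generalized (left-continuous) inverse of a nonincreasing function:
f^←(x) = inf{y ≥ 0 : f(y) ≤ x}. -/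
noncomputable def genInv (f : ℝ → ℝ) (x : ℝ) : ℝ :=
  sInf {y : ℝ | 0 ≤ y ∧ f y ≤ x}

lemma genInv_eq {g : ℝ → ℝ} (hganti : StrictAnti g) {x u : ℝ} (hu0 : 0 ≤ u)
    (hux : g u = x) : genInv g x = u := by
  have : {y : ℝ | 0 ≤ y ∧ g y ≤ x} = Set.Ici u := by
    ext w
    simp only [Set.mem_setOf_eq, Set.mem_Ici]
    constructor
    · rintro ⟨hw0, hwx⟩
      rw [← hux] at hwx
      exact (hganti.le_iff_ge).mp hwx
    · intro hw
      exact ⟨le_trans hu0 hw, hux ▸ (hganti.le_iff_ge).mpr hw⟩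
  rw [genInv, this, csInf_Ici]

lemma taylor_bound {g g' : ℝ → ℝ} (hg : ∀ x, HasDerivAt g (g' x) x) {p u α η : ℝ}
    (hα : ∀ ζ ∈ Set.Icc (p - η) (p + η), |g' ζ - g' p| ≤ α) (hu : |u - p| ≤ η)
    (hη : 0 ≤ η) : |g u - g p - (u - p) * g' p| ≤ α * |u - p| := by
  have key := Convex.norm_image_sub_le_of_norm_hasDerivWithin_le
    (f := fun w => g w - g' p * w) (f' := fun w => g' w - g' p)
    (s := Set.Icc (p - η) (p + η)) (C := α) (x := p) (y := u)
    (fun w hw => (((hg w).sub ((hasDerivAt_id w).const_mul (g' p))).hasDerivWithinAt).congr_deriv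
      (by ring))
    (fun w hw => by simpa [Real.norm_eq_abs] using hα w hw)
    (convex_Icc _ _)
    (by constructor <;> linarith)
    (by rcases abs_le.mp hu with ⟨h1, h2⟩; constructor <;> linarith)
  simp only [Real.norm_eq_abs] at key
  calc |g u - g p - (u - p) * g' p| = |(g u - g' p * u) - (g p - g' p * p)| := by ring_nf
    _ ≤ α * |u - p| := key

section Spec
variable {g g' : ℝ → ℝ} {ginf : ℝ}

lemma ginf_lt (hg : ∀ x, HasDerivAt g (g' x) x) (hg'neg : ∀ x, g' x < 0)
    (hginf : Tendsto g atTop (nhds ginf)) (v : ℝ) : ginf < g v := by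
  have hderiv : ∀ x, deriv g x = g' x := fun x => (hg x).deriv
  have hganti : StrictAnti g := strictAnti_of_deriv_neg (fun x => (hderiv x) ▸ hg'neg x)
  have h1 : ginf ≤ g (v + 1) :=
    le_of_tendsto hginf (eventually_atTop.mpr ⟨v + 1, fun s hs => hganti.antitone hs⟩)
  exact lt_of_le_of_lt h1 (hganti (lt_add_one v))

lemma genInv_spec (hg : ∀ x, HasDerivAt g (g' x) x) (hg'neg : ∀ x, g' x < 0)
    (hginf : Tendsto g atTop (nhds ginf)) {x : ℝ} (hx : x ∈ Set.Ioo ginf (g 0)) :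
    0 < genInv g x ∧ g (genInv g x) = x := by
  have hderiv : ∀ x, deriv g x = g' x := fun x => (hg x).deriv
  have hganti : StrictAnti g := strictAnti_of_deriv_neg (fun x => (hderiv x) ▸ hg'neg x)
  have hgcont : Continuous g := (Differentiable.continuous (fun w => (hg w).differentiableAt))
  obtain ⟨T, hT⟩ := eventually_atTop.mp (hginf.eventually_lt_const hx.1)
  set T' := max T 0 with hT'def
  have hT'0 : 0 ≤ T' := le_max_right _ _
  have hgT' : g T' < x := lt_of_le_of_lt (hganti.antitone (le_max_left T 0)) (hT T le_rfl)
  have hmem : x ∈ Set.Icc (g T') (g 0) := ⟨le_of_lt hgT', le_of_lt hx.2⟩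
  obtain ⟨u, hu, hux⟩ := intermediate_value_Icc' hT'0 hgcont.continuousOn hmem
  have heq : genInv g x = u := genInv_eq hganti hu.1 hux
  refine ⟨?_, by rw [heq, hux]⟩
  rw [heq]
  have : g u < g 0 := by rw [hux]; exact hx.2
  exact hganti.lt_iff_gt.mp this

end Spec

section Deriv
variable {g g' : ℝ → ℝ} {ginf : ℝ}

lemma genInv_hasDeriv (hg : ∀ x, HasDerivAt g (g' x) x) (hg'neg : ∀ x, g' x < 0)
    (hginf : Tendsto g atTop (nhds ginf)) {x : ℝ} (hx : x ∈ Set.Ioo ginf (g 0)) :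
    HasDerivAt (genInv g) (g' (genInv g x))⁻¹ x := by
  have hderiv : ∀ x, deriv g x = g' x := fun x => (hg x).deriv
  have hganti : StrictAnti g := strictAnti_of_deriv_neg (fun x => (hderiv x) ▸ hg'neg x)
  obtain ⟨hu0, hux⟩ := genInv_spec hg hg'neg hginf hx
  set u := genInv g x with hudef
  -- continuity of genInv g at x
  have hcont : ContinuousAt (genInv g) x := by
    rw [ContinuousAt, Metric.tendsto_nhds]
    intro ε' hε'
    set e := min ε' (u / 2) with hedef
    have he : 0 < e := lt_min hε' (by linarith)
    have heu : e < u := lt_of_le_of_lt (min_le_right _ _) (by linarith)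
    have hnbhd : Set.Ioo (g (u + e)) (g (u - e)) ∈ 𝓝 x := by
      apply Ioo_mem_nhds
      · rw [← hux]; exact hganti (by linarith)
      · rw [← hux]; exact hganti (by linarith)
    filter_upwards [hnbhd] with x' hx'
    have hx'mem : x' ∈ Set.Ioo ginf (g 0) := by
      constructor
      · exact lt_trans (ginf_lt hg hg'neg hginf (u + e)) hx'.1
      · exact lt_trans hx'.2 (hganti (by linarith))
    obtain ⟨hu'0, hu'x⟩ := genInv_spec hg hg'neg hginf hx'mem
    set u' := genInv g x' with hu'def
    have h1 : u - e < u' := hganti.lt_iff_gt.mp (by rw [hu'x]; exact hx'.2)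
    have h2 : u' < u + e := hganti.lt_iff_gt.mp (by rw [hu'x]; exact hx'.1)
    rw [Real.dist_eq, abs_lt]
    constructor
    · have : e ≤ ε' := min_le_left _ _
      linarith
    · have : e ≤ ε' := min_le_left _ _
      linarith
  have hinv : ∀ᶠ x' in 𝓝 x, g (genInv g x') = x' := by
    filter_upwards [isOpen_Ioo.mem_nhds hx] with x' hx'
    exact (genInv_spec hg hg'neg hginf hx').2
  exact HasDerivAt.of_local_left_inverse hcont (hg (genInv g x))
    (ne_of_lt (hg'neg _)) hinv

end Deriv

set_option maxHeartbeats 1000000 in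
/-- Vervaat's lemma: second-order locally uniform convergence of a family of
nonincreasing functions transfers to their generalized inverses. -/
theorem vervaat_lemma (z : ℝ → ℝ → ℝ) (g g' y δ : ℝ → ℝ) (ginf : ℝ)
    (hznn : ∀ t, ∀ x ∈ Set.Ici (0 : ℝ), 0 ≤ z t x)
    (hzmono : ∀ t, AntitoneOn (z t) (Set.Ici (0 : ℝ)))
    (hg : ∀ x, HasDerivAt g (g' x) x)
    (hg'neg : ∀ x, g' x < 0) (hg'cont : Continuous g')
    (hδ0 : Tendsto δ atTop (nhds 0)) (hδpos : ∀ᶠ t in atTop, 0 < δ t)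
    (hy : Continuous y)
    (hconv : TendstoLocallyUniformlyOn (fun t x => (z t x - g x) / δ t) y
      atTop (Set.Ioi (0 : ℝ)))
    (hginf : Tendsto g atTop (nhds ginf)) :
    TendstoLocallyUniformlyOn
      (fun t x => (genInv (z t) x - genInv g x) / δ t)
      (fun x => -(deriv (genInv g) x) * y (genInv g x))
      atTop (Set.Ioo ginf (g 0)) := by
  have hderiv : ∀ w, deriv g w = g' w := fun w => (hg w).deriv
  have hganti : StrictAnti g := strictAnti_of_deriv_neg (fun w => (hderiv w) ▸ hg'neg w)
  rw [Metric.tendstoLocallyUniformlyOn_iff]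
  intro ε hε x0 hx0
  -- neighborhood radius
  set ρ := min (x0 - ginf) (g 0 - x0) / 2 with hρdef
  have hρ1 : ρ < x0 - ginf := by
    have := min_le_left (x0 - ginf) (g 0 - x0)
    have h2 : 0 < x0 - ginf := by linarith [hx0.1]
    rw [hρdef]; linarith
  have hρ2 : ρ < g 0 - x0 := by
    have := min_le_right (x0 - ginf) (g 0 - x0)
    have h2 : 0 < g 0 - x0 := by linarith [hx0.2]
    rw [hρdef]; linarith
  have hρpos : 0 < ρ := by
    have h1 : 0 < x0 - ginf := by linarith [hx0.1]
    have h2 : 0 < g 0 - x0 := by linarith [hx0.2]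
    rw [hρdef]
    rcases min_cases (x0 - ginf) (g 0 - x0) with ⟨h, _⟩ | ⟨h, _⟩ <;> rw [h] <;> linarith
  have hKsub : Set.Icc (x0 - ρ) (x0 + ρ) ⊆ Set.Ioo ginf (g 0) := by
    rintro w ⟨hw1, hw2⟩
    exact ⟨by linarith, by linarith⟩
  obtain ⟨hapos, hga⟩ := genInv_spec hg hg'neg hginf
    (hKsub ⟨by linarith, le_refl _⟩)
  obtain ⟨hbpos, hgb⟩ := genInv_spec hg hg'neg hginf
    (hKsub ⟨le_refl _, by linarith⟩)
  set a := genInv g (x0 + ρ) with hadef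
  set b := genInv g (x0 - ρ) with hbdef
  clear_value a b
  have hψ : ∀ x ∈ Set.Icc (x0 - ρ) (x0 + ρ),
      0 < genInv g x ∧ g (genInv g x) = x ∧ a ≤ genInv g x ∧ genInv g x ≤ b := by
    intro x hx
    obtain ⟨hp, hgp⟩ := genInv_spec hg hg'neg hginf (hKsub hx)
    refine ⟨hp, hgp, ?_, ?_⟩
    · exact hganti.le_iff_ge.mp (by rw [hgp, hga]; exact hx.2)
    · exact hganti.le_iff_ge.mp (by rw [hgp, hgb]; exact hx.1)
  have hab : a ≤ b := by
    have := hψ (x0 + ρ) ⟨by linarith, le_refl _⟩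
    exact le_trans this.2.2.1 this.2.2.2
  clear_value ρ
  set J := Set.Icc (a / 2) (b + 1) with hJdef
  have hJne : a / 2 ≤ b + 1 := by linarith
  have hJIoi : J ⊆ Set.Ioi (0 : ℝ) := fun w hw => lt_of_lt_of_le (by linarith) hw.1
  -- lower bound for -g' on J
  obtain ⟨ξ0, hξ0J, hξ0⟩ := isCompact_Icc.exists_isMaxOn
    (Set.nonempty_Icc.mpr hJne) hg'cont.continuousOn
  set m := -g' ξ0 with hmdef
  have hm : 0 < m := by rw [hmdef]; linarith [hg'neg ξ0]
  have hmJ : ∀ ζ ∈ J, g' ζ ≤ -m := fun ζ hζ => by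
    rw [hmdef]; have := hξ0 hζ; simp only [Set.mem_setOf_eq] at this; linarith
  -- bound for y on J
  obtain ⟨C2, hC2⟩ := isCompact_Icc.exists_bound_of_continuousOn hy.continuousOn
  have hC2_0 : 0 ≤ C2 :=
    le_trans (norm_nonneg _) (hC2 (a / 2) (Set.left_mem_Icc.mpr hJne))
  set CL := C2 / m with hCLdef
  have hCL0 : 0 ≤ CL := div_nonneg hC2_0 hm.le
  have hC2m : C2 = CL * m := by rw [hCLdef, div_mul_cancel₀ C2 hm.ne']
  -- moduli of continuity
  set β := m * ε / 8 with hβdef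
  have hβpos : 0 < β := by rw [hβdef]; positivity
  set α := m * ε / (8 * (CL + ε)) with hαdef
  have hCLε : 0 < CL + ε := by linarith
  have hαpos : 0 < α := by rw [hαdef]; positivity
  clear_value m CL β α
  obtain ⟨η1, hη1, hmod1⟩ := Metric.uniformContinuousOn_iff.mp
    (isCompact_Icc.uniformContinuousOn_of_continuous (s := J) hg'cont.continuousOn) α hαpos
  obtain ⟨η2, hη2, hmod2⟩ := Metric.uniformContinuousOn_iff.mp
    (isCompact_Icc.uniformContinuousOn_of_continuous (s := J) hy.continuousOn) β hβpos
  set η := min (min (η1 / 2) (η2 / 2)) (min (a / 2) 1) with hηdef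
  have hηpos : 0 < η := by
    rw [hηdef]
    apply lt_min (lt_min (by linarith) (by linarith)) (lt_min (by linarith) (by norm_num))
  have hη_a : η ≤ a / 2 := le_trans (min_le_right _ _) (min_le_left _ _)
  have hη_1 : η ≤ 1 := le_trans (min_le_right _ _) (min_le_right _ _)
  have hη_η1 : η < η1 := lt_of_le_of_lt
    (le_trans (min_le_left _ _) (min_le_left _ _)) (by linarith)
  have hη_η2 : η < η2 := lt_of_le_of_lt
    (le_trans (min_le_left _ _) (min_le_right _ _)) (by linarith)
  clear_value η
  -- eventual facts in t
  have hT2 : ∀ᶠ t in atTop, δ t * (CL + ε) < η := by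
    have h := Metric.tendsto_nhds.mp hδ0 (η / (CL + ε)) (by positivity)
    filter_upwards [h, hδpos] with t ht hpt
    rw [Real.dist_eq, sub_zero, abs_of_pos hpt] at ht
    calc δ t * (CL + ε) < (η / (CL + ε)) * (CL + ε) := by
          exact mul_lt_mul_of_pos_right ht hCLε
      _ = η := by field_simp
  have hT3 : ∀ᶠ t in atTop, ∀ w ∈ J, dist (y w) ((z t w - g w) / δ t) < β :=
    Metric.tendstoUniformlyOn_iff.mp
      ((tendstoLocallyUniformlyOn_iff_forall_isCompact isOpen_Ioi).mp hconv J hJIoi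
        isCompact_Icc) β hβpos
  refine ⟨Set.Ioo (x0 - ρ) (x0 + ρ) ∩ Set.Ioo ginf (g 0), ?_, ?_⟩
  · exact Filter.inter_mem
      (mem_nhdsWithin_of_mem_nhds (Ioo_mem_nhds (by linarith) (by linarith)))
      self_mem_nhdsWithin
  filter_upwards [hδpos, hT2, hT3] with t hδt hT2t hT3t
  rintro x ⟨hxK', hxIoo⟩
  have hxK : x ∈ Set.Icc (x0 - ρ) (x0 + ρ) := ⟨hxK'.1.le, hxK'.2.le⟩
  obtain ⟨hppos, hgp, hap, hpb⟩ := hψ x hxK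
  set p := genInv g x with hpdef
  clear_value p
  have hpJ : p ∈ J := ⟨by linarith, by linarith⟩
  have hg'p : g' p ≤ -m := hmJ p hpJ
  have hg'pne : g' p ≠ 0 := ne_of_lt (hg'neg p)
  set Lx := -(g' p)⁻¹ * y p with hLxdef
  clear_value Lx
  have hLxg : Lx * g' p = -y p := by rw [hLxdef]; field_simp
  have hyp_bd : |y p| ≤ C2 := by
    have := hC2 p hpJ; rwa [Real.norm_eq_abs] at this
  have hLbd : |Lx| ≤ CL := by
    rw [hLxdef, abs_mul, abs_neg, abs_inv]
    have h1 : m ≤ |g' p| := by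
      rw [abs_of_neg (hg'neg p)]; linarith
    have h3 : |g' p|⁻¹ ≤ m⁻¹ := by
      apply inv_anti₀ hm h1
    calc |g' p|⁻¹ * |y p| ≤ m⁻¹ * C2 := by
          apply mul_le_mul h3 hyp_bd (abs_nonneg _) (by positivity)
      _ = CL := by rw [hCLdef]; ring
  -- key two-sided estimate
  have key : ∀ u, |u - p| ≤ δ t * (CL + ε) →
      a / 2 ≤ u ∧ u ≤ b + 1 ∧
      z t u - x ≤ (u - p) * g' p + δ t * y p + δ t * (3 * β) ∧
      (u - p) * g' p + δ t * y p - δ t * (3 * β) ≤ z t u - x := by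
    intro u hu
    have huη : |u - p| ≤ η := le_trans hu hT2t.le
    obtain ⟨hu1, hu2⟩ := abs_le.mp huη
    have huJ : u ∈ J := ⟨by linarith, by linarith⟩
    have hmodIcc : ∀ ζ ∈ Set.Icc (p - η) (p + η), |g' ζ - g' p| ≤ α := by
      rintro ζ ⟨hζ1, hζ2⟩
      have hζJ : ζ ∈ J := ⟨by linarith, by linarith⟩
      have hd : dist ζ p < η1 := by
        rw [Real.dist_eq]
        exact lt_of_le_of_lt (abs_le.mpr ⟨by linarith, by linarith⟩) hη_η1
      have := hmod1 ζ hζJ p hpJ hd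
      rw [Real.dist_eq] at this
      exact this.le
    have hE1 : |g u - g p - (u - p) * g' p| ≤ α * |u - p| :=
      taylor_bound hg hmodIcc huη hηpos.le
    have hE1' : α * |u - p| ≤ δ t * β := by
      calc α * |u - p| ≤ α * (δ t * (CL + ε)) := by
            exact mul_le_mul_of_nonneg_left hu hαpos.le
        _ = δ t * (α * (CL + ε)) := by ring
        _ = δ t * β := by
            congr 1
            rw [hαdef, hβdef]; field_simp
    have hE2 : |y u - y p| ≤ β := by
      have hd : dist u p < η2 := by
        rw [Real.dist_eq]; exact lt_of_le_of_lt huη hη_η2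
      have := hmod2 u huJ p hpJ hd
      rw [Real.dist_eq] at this
      exact this.le
    have hE3 : |(z t u - g u) / δ t - y u| ≤ β := by
      have := hT3t u huJ
      rw [Real.dist_eq, abs_sub_comm] at this
      exact this.le
    obtain ⟨hA1, hA2⟩ := abs_le.mp (le_trans hE1 hE1')
    obtain ⟨hB1, hB2⟩ := abs_le.mp hE2
    obtain ⟨hC1, hc2⟩ := abs_le.mp hE3
    have hδne : δ t ≠ 0 := ne_of_gt hδt
    have hiden : z t u - x = (g u - g p - (u - p) * g' p) + (u - p) * g' p
        + δ t * y p + δ t * (y u - y p) + δ t * ((z t u - g u) / δ t - y u) := by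
      rw [← hgp]
      field_simp
      ring
    have hB1' : δ t * (-β) ≤ δ t * (y u - y p) := mul_le_mul_of_nonneg_left hB1 hδt.le
    have hB2' : δ t * (y u - y p) ≤ δ t * β := mul_le_mul_of_nonneg_left hB2 hδt.le
    have hC1' : δ t * (-β) ≤ δ t * ((z t u - g u) / δ t - y u) :=
      mul_le_mul_of_nonneg_left hC1 hδt.le
    have hC2' : δ t * ((z t u - g u) / δ t - y u) ≤ δ t * β :=
      mul_le_mul_of_nonneg_left hc2 hδt.le
    refine ⟨huJ.1, huJ.2, ?_, ?_⟩ <;> rw [hiden] <;> linarith [hA1, hA2, hB1', hB2', hC1', hC2']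
  -- upper bound for genInv (z t) x
  set u := p + δ t * (Lx + ε / 2) with hudef
  clear_value u
  have hu_dist : |u - p| ≤ δ t * (CL + ε) := by
    rw [hudef, add_sub_cancel_left, abs_mul, abs_of_pos hδt]
    apply mul_le_mul_of_nonneg_left _ hδt.le
    calc |Lx + ε / 2| ≤ |Lx| + ε / 2 := by
          have := abs_add_le Lx (ε / 2)
          rwa [abs_of_pos (by linarith : (0:ℝ) < ε / 2)] at this
      _ ≤ CL + ε := by linarith
  obtain ⟨hu_a, _, hu_up, _⟩ := key u hu_dist
  have hztu : z t u ≤ x := by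
    have h1 : (u - p) * g' p + δ t * y p = δ t * (ε / 2 * g' p) := by
      have : (u - p) * g' p + δ t * y p
          = δ t * (Lx * g' p + ε / 2 * g' p + y p) := by rw [hudef]; ring
      rw [this, hLxg]; ring
    have h2 : δ t * (ε / 2 * g' p) ≤ δ t * (ε / 2 * (-m)) := by
      apply mul_le_mul_of_nonneg_left _ hδt.le
      have : ε / 2 * g' p ≤ ε / 2 * (-m) :=
        mul_le_mul_of_nonneg_left hg'p (by linarith)
      linarith
    have h3 : δ t * (3 * β) = δ t * (3 * (m * ε / 8)) := by rw [hβdef]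
    have h4 : 0 ≤ δ t * (m * ε) := by positivity
    rw [h1] at hu_up
    linarith [hu_up, h2, h3, h4]
  have hS_u : u ∈ {w : ℝ | 0 ≤ w ∧ z t w ≤ x} := ⟨by linarith, hztu⟩
  have hbdd : BddBelow {w : ℝ | 0 ≤ w ∧ z t w ≤ x} := ⟨0, fun w hw => hw.1⟩
  have hupper : genInv (z t) x ≤ u := csInf_le hbdd hS_u
  -- lower bound for genInv (z t) x
  set v := p + δ t * (Lx - ε / 2) with hvdef
  clear_value v
  have hlow : ∀ w ∈ {w : ℝ | 0 ≤ w ∧ z t w ≤ x}, v ≤ w := by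
    rintro w ⟨hw0, hwz⟩
    by_contra hcon
    push_neg at hcon
    have hLx1 : Lx - ε / 2 ≤ CL + ε := by
      have := (abs_le.mp hLbd).2; linarith
    rcases le_or_gt (p - δ t * (CL + ε)) w with hc | hc
    · have hwd : |w - p| ≤ δ t * (CL + ε) := by
        rw [abs_le]
        constructor
        · linarith
        · have h1 : w - p < δ t * (Lx - ε / 2) := by rw [hvdef] at hcon; linarith
          have h2 : δ t * (Lx - ε / 2) ≤ δ t * (CL + ε) :=
            mul_le_mul_of_nonneg_left hLx1 hδt.le
          linarith
      obtain ⟨_, _, _, hest⟩ := key w hwd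
      have h1 : w - p < δ t * (Lx - ε / 2) := by rw [hvdef] at hcon; linarith
      have h2 : δ t * (Lx - ε / 2) * g' p < (w - p) * g' p :=
        mul_lt_mul_of_neg_right h1 (hg'neg p)
      have e1 : δ t * (Lx - ε / 2) * g' p
          = δ t * (Lx * g' p) - δ t * (ε / 2 * g' p) := by ring
      have e3 : δ t * (Lx * g' p) = -(δ t * y p) := by rw [hLxg]; ring
      have k3 : δ t * (ε / 2 * g' p) ≤ δ t * (ε / 2 * (-m)) := by
        apply mul_le_mul_of_nonneg_left _ hδt.le
        have : ε / 2 * g' p ≤ ε / 2 * (-m) :=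
          mul_le_mul_of_nonneg_left hg'p (by linarith)
        linarith
      have hβ3 : δ t * (3 * β) = δ t * (3 * (m * ε / 8)) := by rw [hβdef]
      have hpos : 0 < δ t * (m * ε) := by positivity
      linarith [hest, h2, e1, e3, k3, hβ3, hpos, hwz]
    · set w1 := p - δ t * (CL + ε) with hw1def
      have hw1d : |w1 - p| ≤ δ t * (CL + ε) := by
        rw [hw1def]
        have : p - δ t * (CL + ε) - p = -(δ t * (CL + ε)) := by ring
        rw [this, abs_neg, abs_of_nonneg (by positivity)]
      obtain ⟨hw1a, _, _, hest⟩ := key w1 hw1d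
      have hmono : z t w1 ≤ z t w := by
        apply hzmono t (Set.mem_Ici.mpr hw0) (Set.mem_Ici.mpr (by linarith)) hc.le
      have e1 : (w1 - p) * g' p = -(δ t * (CL + ε) * g' p) := by rw [hw1def]; ring
      have k1 : δ t * (CL + ε) * g' p ≤ δ t * (CL + ε) * (-m) :=
        mul_le_mul_of_nonneg_left hg'p (by positivity)
      have hyp1 : -C2 ≤ y p := by have := (abs_le.mp hyp_bd).1; linarith
      have hyp1' : δ t * (-C2) ≤ δ t * y p := mul_le_mul_of_nonneg_left hyp1 hδt.le
      have hβ3 : δ t * (3 * β) = δ t * (3 * (m * ε / 8)) := by rw [hβdef]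
      have hpos : 0 < δ t * (m * ε) := by positivity
      have hC2m' : δ t * (-C2) = -(δ t * (CL * m)) := by rw [hC2m]; ring
      linarith [hest, hmono, hwz, e1, k1, hyp1', hβ3, hpos, hC2m']
  have hlower : v ≤ genInv (z t) x := le_csInf ⟨u, hS_u⟩ hlow
  -- conclude
  have hd := (genInv_hasDeriv hg hg'neg hginf hxIoo).deriv
  rw [hd, ← hpdef]
  have h1 : (genInv (z t) x - p) / δ t ≤ Lx + ε / 2 := by
    rw [div_le_iff₀ hδt]
    have : u - p = δ t * (Lx + ε / 2) := by rw [hudef]; ring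
    linarith [hupper, this]
  have h2 : Lx - ε / 2 ≤ (genInv (z t) x - p) / δ t := by
    rw [le_div_iff₀ hδt]
    have : v - p = δ t * (Lx - ε / 2) := by rw [hvdef]; ring
    linarith [hlower, this]
  rw [Real.dist_eq, ← hLxdef, abs_lt]
  constructor <;> linarith
end

section
/- Let X be a positive random variable with survival function F̄ such that t·F̄(b(t)x) − x^{-α} divided by A(b(t)) converges to H₁(x) = c₁ x^{-α}(x^{ρ}−1)/ρ locally uniformly in x > 0, where b ∈ RV_{1/α}, |A| ∈ RV_{ρ}, A(t) → 0, ρ ≤ 0, 0 < c₁ < ∞. Then for every x > 0, lim_{γ↓0} [Q_{γx}(X)/b(1/γ) − x^{-1/α}] / A(b(1/γ)) = (c₁/(αρ)) x^{-1/α}(x^{-ρ/α} − 1), where Q_{γ}(X) = VaR_{1−γ}(X). -/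
open Filter Real MeasureTheory Topology

/-- Q_γ(X) = VaR_{1−γ}(X) = F̄^←(γ), the (1−γ)-quantile. -/
noncomputable def Qgamma {Ω : Type*} [MeasurableSpace Ω] (μ : Measure Ω) (X : Ω → ℝ)
    (γ : ℝ) : ℝ :=
  sInf {y : ℝ | (μ {ω | y < X ω}).toReal ≤ γ}

/-- Second-order expansion of quantiles for a positive random variable
X ∈ 2RV_{−α,ρ}(b,A,H₁): application of Vervaat's lemma. -/
theorem quantile_2RV_expansion {Ω : Type*} [MeasurableSpace Ω] (μ : Measure Ω)
    [IsProbabilityMeasure μ]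
    (X : Ω → ℝ) (hm : Measurable X) (hpos : ∀ ω, 0 < X ω)
    (α ρ c₁ : ℝ) (hα : 0 < α) (hρ : ρ ≤ 0) (hc₁ : 0 < c₁)
    (b A : ℝ → ℝ)
    (hbtop : Tendsto b atTop atTop)
    (hbRV : ∀ x : ℝ, 0 < x → Tendsto (fun t => b (t * x) / b t) atTop (nhds (x ^ (1 / α))))
    (hA0 : Tendsto A atTop (nhds 0))
    (hARV : ∀ x : ℝ, 0 < x →
      Tendsto (fun t => |A (t * x)| / |A t|) atTop (nhds (x ^ ρ)))
    (hconv : TendstoLocallyUniformlyOn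
      (fun t x => (t * (μ {ω | b t * x < X ω}).toReal - x ^ (-α)) / A (b t))
      (fun x => if ρ = 0 then c₁ * x ^ (-α) * Real.log x
                else c₁ * x ^ (-α) * (x ^ ρ - 1) / ρ)
      atTop (Set.Ioi (0 : ℝ)))
    (x : ℝ) (hx : 0 < x) :
    Tendsto (fun γ : ℝ =>
        (Qgamma μ X (γ * x) / b (1 / γ) - x ^ (-(1 / α))) / A (b (1 / γ)))
      (𝓝[>] 0)
      (nhds (if ρ = 0 then -(c₁ / α ^ 2) * x ^ (-(1 / α)) * Real.log x
             else c₁ / (α * ρ) * x ^ (-(1 / α)) * (x ^ (-ρ / α) - 1))) := by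
  set H : ℝ → ℝ := fun x => if ρ = 0 then c₁ * x ^ (-α) * Real.log x
                else c₁ * x ^ (-α) * (x ^ ρ - 1) / ρ with hHdef
  set L : ℝ := if ρ = 0 then -(c₁ / α ^ 2) * x ^ (-(1 / α)) * Real.log x
             else c₁ / (α * ρ) * x ^ (-(1 / α)) * (x ^ (-ρ / α) - 1) with hLdef
  set q : ℝ := x ^ (-(1 / α)) with hqdef
  have hq : 0 < q := Real.rpow_pos_of_pos hx _
  set D : ℝ := α * x ^ (1 + 1 / α) with hDdef
  have hD : 0 < D := mul_pos hα (Real.rpow_pos_of_pos hx _)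
  -- basic rpow computations
  have hqx : q ^ (-α) = x := by
    rw [hqdef, ← Real.rpow_mul hx.le]
    have : -(1 / α) * -α = 1 := by field_simp
    rw [this, Real.rpow_one]
  have hxx : x ^ (1 + 1 / α) * x ^ (-(1 / α)) = x := by
    rw [← Real.rpow_add hx]
    norm_num
  rw [← hqdef] at hxx
  have hα' : α ≠ 0 := hα.ne'
  -- key constant identity : D * L = H q
  have hDL : D * L = H q := by
    by_cases hρ0 : ρ = 0
    · simp only [hHdef, hLdef, hDdef, if_pos hρ0]
      have hlogq : Real.log q = -(1 / α) * Real.log x := by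
        rw [hqdef, Real.log_rpow hx]
      rw [hqx, hlogq]
      have e1 : α * (c₁ / α ^ 2) = c₁ / α := by
        field_simp
      linear_combination (-(c₁ / α * Real.log x)) * hxx
        + (-(x ^ (1 + 1 / α) * q * Real.log x)) * e1
    · simp only [hHdef, hLdef, hDdef, if_neg hρ0]
      have hqρ : q ^ ρ = x ^ (-ρ / α) := by
        rw [hqdef, ← Real.rpow_mul hx.le]
        congr 1
        field_simp
      rw [hqx, hqρ]
      have e2 : α * (c₁ / (α * ρ)) = c₁ / ρ := by
        field_simp
      linear_combination (c₁ / ρ * (x ^ (-ρ / α) - 1)) * hxx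
        + (x ^ (1 + 1 / α) * q * (x ^ (-ρ / α) - 1)) * e2
  -- survival function facts
  have hanti : ∀ y z : ℝ, y ≤ z →
      (μ {ω | z < X ω}).toReal ≤ (μ {ω | y < X ω}).toReal := by
    intro y z hyz
    exact ENNReal.toReal_mono (measure_ne_top μ _)
      (measure_mono fun ω hω => lt_of_le_of_lt hyz hω)
  have hneg1 : ∀ y : ℝ, y < 0 → (μ {ω | y < X ω}).toReal = 1 := by
    intro y hy
    have : {ω | y < X ω} = Set.univ :=
      Set.eq_univ_of_forall fun ω => hy.trans (hpos ω)
    rw [this, measure_univ, ENNReal.toReal_one]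
  have hsmall : ∀ p : ℝ, 0 < p → ∃ y : ℝ, (μ {ω | y < X ω}).toReal ≤ p := by
    intro p hp
    have hmeas : ∀ n : ℕ, NullMeasurableSet {ω | (n : ℝ) < X ω} μ := by
      intro n
      exact (hm measurableSet_Ioi).nullMeasurableSet
    have hmono : Antitone fun n : ℕ => {ω | (n : ℝ) < X ω} := by
      intro n m hnm ω hω
      exact lt_of_le_of_lt ((Nat.cast_le (α := ℝ)).mpr hnm) hω
    have h0 : Tendsto (μ ∘ fun n : ℕ => {ω | (n : ℝ) < X ω}) atTop
        (𝓝 (μ (⋂ n : ℕ, {ω | (n : ℝ) < X ω}))) :=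
      tendsto_measure_iInter_atTop hmeas hmono ⟨0, measure_ne_top μ _⟩
    have hempty : (⋂ n : ℕ, {ω | (n : ℝ) < X ω}) = ∅ := by
      ext ω
      simp only [Set.mem_iInter, Set.mem_setOf_eq, Set.mem_empty_iff_false, iff_false, not_forall,
        not_lt]
      obtain ⟨n, hn⟩ := exists_nat_gt (X ω)
      exact ⟨n, hn.le⟩
    rw [hempty, measure_empty] at h0
    have h0' : Tendsto (fun n : ℕ => (μ {ω | (n : ℝ) < X ω}).toReal) atTop (𝓝 0) := by
      have := (ENNReal.tendsto_toReal (by simp)).comp h0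
      rw [ENNReal.toReal_zero] at this
      exact this
    obtain ⟨n, hn⟩ := (h0'.eventually_lt_const hp).exists
    exact ⟨n, hn.le⟩
  -- Galois connection inequalities
  have hQ_le : ∀ p y : ℝ, p < 1 → (μ {ω | y < X ω}).toReal ≤ p → Qgamma μ X p ≤ y := by
    intro p y hp1 hy
    refine csInf_le ⟨0, ?_⟩ hy
    intro z hz
    by_contra hz0
    push_neg at hz0
    rw [Set.mem_setOf_eq, hneg1 z hz0] at hz
    linarith
  have hle_Q : ∀ p y : ℝ, 0 < p → p < (μ {ω | y < X ω}).toReal → y ≤ Qgamma μ X p := by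
    intro p y hp hy
    obtain ⟨y₀, hy₀⟩ := hsmall p hp
    refine le_csInf ⟨y₀, hy₀⟩ ?_
    intro z hz
    by_contra hzy
    push_neg at hzy
    have := hanti z y hzy.le
    rw [Set.mem_setOf_eq] at hz
    linarith
  -- auxiliary convergences
  have hAb0 : Tendsto (fun t => A (b t)) atTop (𝓝 0) := hA0.comp hbtop
  have hAbne : ∀ᶠ t in atTop, A (b t) ≠ 0 := by
    have h1 : Tendsto (fun t => |A (t * 1)| / |A t|) atTop (𝓝 ((1 : ℝ) ^ ρ)) := hARV 1 one_pos
    rw [Real.one_rpow] at h1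
    have h2 : ∀ᶠ t in atTop, (1 : ℝ) / 2 < |A (t * 1)| / |A t| :=
      h1.eventually_const_lt (by norm_num)
    have h3 : ∀ᶠ t in atTop, A t ≠ 0 := by
      filter_upwards [h2] with t ht hA
      rw [mul_one, hA] at ht
      simp at ht
      linarith
    exact hbtop.eventually h3
  -- continuity of H at q within Ioi 0
  have hHcont : ContinuousWithinAt H (Set.Ioi (0 : ℝ)) q := by
    apply ContinuousAt.continuousWithinAt
    by_cases hρ0 : ρ = 0
    · have : H = fun u => c₁ * u ^ (-α) * Real.log u := by
        funext u; simp [hHdef, hρ0]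
      rw [this]
      exact (continuousAt_const.mul
        (Real.continuousAt_rpow_const q (-α) (Or.inl hq.ne'))).mul
        (Real.continuousAt_log hq.ne')
    · have : H = fun u => c₁ * u ^ (-α) * (u ^ ρ - 1) / ρ := by
        funext u; simp [hHdef, hρ0]
      rw [this]
      exact (((continuousAt_const.mul
        (Real.continuousAt_rpow_const q (-α) (Or.inl hq.ne'))).mul
        ((Real.continuousAt_rpow_const q ρ (Or.inl hq.ne')).sub continuousAt_const)).div
        continuousAt_const hρ0)
  -- derivative of u ↦ u^(-α) at q
  have hderiv : HasDerivAt (fun u : ℝ => u ^ (-α)) (-D) q := by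
    have h := Real.hasDerivAt_rpow_const (x := q) (p := -α) (Or.inl hq.ne')
    convert h using 1
    rw [hqdef, ← Real.rpow_mul hx.le]
    have he : -(1 / α) * (-α - 1) = 1 + 1 / α := by field_simp; ring
    rw [he, hDdef]
    ring
  have hlo : (fun u => u ^ (-α) - q ^ (-α) - (u - q) * (-D)) =o[𝓝 q] fun u => u - q := by
    have := hasDerivAt_iff_isLittleO.1 hderiv
    simpa [smul_eq_mul, mul_comm] using this
  -- the main limit in terms of t → ∞
  have main : Tendsto (fun t : ℝ => (Qgamma μ X (x / t) / b t - q) / A (b t)) atTop (𝓝 L) := by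
    rw [Metric.tendsto_nhds]
    intro ε hε
    set ε' : ℝ := ε / 2 with hε'def
    have hε' : 0 < ε' := by positivity
    have h4 : (0 : ℝ) < D * ε' / 4 := by positivity
    have key : ∀ s : ℝ, s = 1 ∨ s = -1 →
        ∀ᶠ t in atTop,
          |t * (μ {ω | b t * (q + A (b t) * L + s * (|A (b t)| * ε')) < X ω}).toReal - x
            + s * (|A (b t)| * (D * ε'))| < |A (b t)| * (D * ε') ∧
          0 < q + A (b t) * L + s * (|A (b t)| * ε') := by
      intro s hs
      have hs1 : |s| = 1 := by rcases hs with h | h <;> simp [h]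
      set v : ℝ → ℝ := fun t => q + A (b t) * L + s * (|A (b t)| * ε') with hvdef
      have hvt : Tendsto v atTop (𝓝 q) := by
        have : Tendsto (fun t => q + A (b t) * L + s * (|A (b t)| * ε')) atTop
            (𝓝 (q + 0 * L + s * (|(0 : ℝ)| * ε'))) :=
          (tendsto_const_nhds.add (hAb0.mul tendsto_const_nhds)).add
            (tendsto_const_nhds.mul ((hAb0.abs).mul tendsto_const_nhds))
        simpa using this
      have hvmem : ∀ᶠ t in atTop, v t ∈ Set.Ioi (0 : ℝ) := hvt (isOpen_Ioi.mem_nhds hq)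
      have hW : Tendsto (fun t => (t * (μ {ω | b t * v t < X ω}).toReal - (v t) ^ (-α)) /
          A (b t)) atTop (𝓝 (H q)) :=
        hconv.tendsto_comp hHcont (Set.mem_Ioi.2 hq) (tendsto_nhdsWithin_iff.2 ⟨hvt, hvmem⟩)
      have hWDL : Tendsto (fun t => (t * (μ {ω | b t * v t < X ω}).toReal - (v t) ^ (-α)) /
          A (b t) - D * L) atTop (𝓝 0) := by
        have := hW.sub_const (D * L)
        rwa [← hDL, sub_self] at this
      have hWsmall : ∀ᶠ t in atTop,
          |(t * (μ {ω | b t * v t < X ω}).toReal - (v t) ^ (-α)) / A (b t) - D * L|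
            ≤ D * ε' / 4 := by
        filter_upwards [NormedAddCommGroup.tendsto_nhds_zero.1 hWDL _ h4] with t ht
        rw [Real.norm_eq_abs] at ht
        exact ht.le
      have hcomp : (fun t => (v t) ^ (-α) - q ^ (-α) - (v t - q) * (-D)) =o[atTop]
          fun t => v t - q := hlo.comp_tendsto hvt
      have hvq : (fun t => v t - q) =O[atTop] fun t => A (b t) := by
        apply Asymptotics.IsBigO.of_bound (|L| + ε')
        filter_upwards with t
        rw [Real.norm_eq_abs, Real.norm_eq_abs]
        have hv : v t - q = A (b t) * L + s * (|A (b t)| * ε') := by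
          simp only [hvdef]; ring
        rw [hv]
        calc |A (b t) * L + s * (|A (b t)| * ε')|
            ≤ |A (b t) * L| + |s * (|A (b t)| * ε')| := abs_add_le _ _
          _ = |A (b t)| * |L| + |A (b t)| * ε' := by
              rw [abs_mul, abs_mul, hs1, one_mul,
                abs_of_nonneg (mul_nonneg (abs_nonneg _) hε'.le)]
          _ = (|L| + ε') * |A (b t)| := by ring
      have hro : (fun t => (v t) ^ (-α) - q ^ (-α) - (v t - q) * (-D)) =o[atTop]
          fun t => A (b t) := hcomp.trans_isBigO hvq
      have hrsmall : ∀ᶠ t in atTop,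
          |(v t) ^ (-α) - q ^ (-α) - (v t - q) * (-D)| ≤ D * ε' / 4 * |A (b t)| := by
        filter_upwards [hro.def h4] with t ht
        simpa [Real.norm_eq_abs] using ht
      filter_upwards [hWsmall, hrsmall, hAbne, hvmem] with t hW' hr' hAne hvpos
      have hApos : 0 < |A (b t)| := abs_pos.2 hAne
      refine ⟨?_, hvpos⟩
      set T : ℝ := t * (μ {ω | b t * v t < X ω}).toReal with hTdef
      set W : ℝ := (T - (v t) ^ (-α)) / A (b t) with hWdef
      set R : ℝ := (v t) ^ (-α) - q ^ (-α) - (v t - q) * (-D) with hRdef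
      have hWa : A (b t) * W = T - (v t) ^ (-α) := by
        rw [hWdef, mul_comm, div_mul_cancel₀ _ hAne]
      have hveq : v t - q = A (b t) * L + s * (|A (b t)| * ε') := by
        simp only [hvdef]; ring
      have hkey_eq : T - x + s * (|A (b t)| * (D * ε')) = A (b t) * (W - D * L) + R := by
        have h2 : (v t) ^ (-α) = x - D * (v t - q) + R := by
          rw [hRdef, hqx]; ring
        have h1 : T = x - D * (v t - q) + R + A (b t) * W := by
          rw [← h2]; linarith [hWa]
        rw [h1, hveq]
        ring
      calc |T - x + s * (|A (b t)| * (D * ε'))| = |A (b t) * (W - D * L) + R| := by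
            rw [hkey_eq]
        _ ≤ |A (b t) * (W - D * L)| + |R| := abs_add_le _ _
        _ = |A (b t)| * |W - D * L| + |R| := by rw [abs_mul]
        _ ≤ |A (b t)| * (D * ε' / 4) + D * ε' / 4 * |A (b t)| :=
            add_le_add (mul_le_mul_of_nonneg_left hW' (abs_nonneg _)) hr'
        _ < |A (b t)| * (D * ε') := by nlinarith
    filter_upwards [key 1 (Or.inl rfl), key (-1) (Or.inr rfl), hAbne,
      eventually_gt_atTop 0, eventually_gt_atTop x, hbtop.eventually (eventually_gt_atTop 0)]
      with t hkp_ hkm_ hAne ht0 htx hbt0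
    obtain ⟨hkp_, hvp_pos⟩ := hkp_
    obtain ⟨hkm_, hvm_pos⟩ := hkm_
    have hApos : 0 < |A (b t)| := abs_pos.2 hAne
    -- upper bound
    have hTp_ : t * (μ {ω | b t * (q + A (b t) * L + 1 * (|A (b t)| * ε')) < X ω}).toReal < x := by
      have := (abs_lt.1 hkp_).2
      linarith
    have hFbp_ : (μ {ω | b t * (q + A (b t) * L + 1 * (|A (b t)| * ε')) < X ω}).toReal
        ≤ x / t := by
      rw [le_div_iff₀ ht0]
      linarith
    have hQub : Qgamma μ X (x / t) ≤ b t * (q + A (b t) * L + 1 * (|A (b t)| * ε')) :=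
      hQ_le _ _ ((div_lt_one ht0).2 htx) hFbp_
    -- lower bound
    have hTm_ : x < t * (μ {ω | b t * (q + A (b t) * L + -1 * (|A (b t)| * ε')) < X ω}).toReal := by
      have := (abs_lt.1 hkm_).1
      linarith
    have hFbm_ : x / t
        < (μ {ω | b t * (q + A (b t) * L + -1 * (|A (b t)| * ε')) < X ω}).toReal := by
      rw [div_lt_iff₀ ht0]
      linarith
    have hQlb : b t * (q + A (b t) * L + -1 * (|A (b t)| * ε')) ≤ Qgamma μ X (x / t) :=
      hle_Q _ _ (div_pos hx ht0) hFbm_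
    -- divide by b t
    have hub : Qgamma μ X (x / t) / b t ≤ q + A (b t) * L + 1 * (|A (b t)| * ε') := by
      rw [div_le_iff₀ hbt0]
      linarith
    have hlb : q + A (b t) * L + -1 * (|A (b t)| * ε') ≤ Qgamma μ X (x / t) / b t := by
      rw [le_div_iff₀ hbt0]
      linarith
    have habs : |Qgamma μ X (x / t) / b t - q - A (b t) * L| ≤ |A (b t)| * ε' :=
      abs_le.2 ⟨by linarith, by linarith⟩
    have heq : (Qgamma μ X (x / t) / b t - q) / A (b t) - L
        = (Qgamma μ X (x / t) / b t - q - A (b t) * L) / A (b t) := by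
      field_simp
    rw [Real.dist_eq, heq, abs_div]
    calc |Qgamma μ X (x / t) / b t - q - A (b t) * L| / |A (b t)|
        ≤ |A (b t)| * ε' / |A (b t)| := by
          gcongr
      _ = ε' := by rw [mul_comm, mul_div_assoc, div_self hApos.ne', mul_one]
      _ < ε := by linarith
  -- transfer from t → ∞ to γ → 0⁺
  have h1γ : Tendsto (fun γ : ℝ => 1 / γ) (𝓝[>] (0 : ℝ)) atTop := by
    simpa [one_div] using tendsto_inv_nhdsGT_zero (𝕜 := ℝ)
  refine (main.comp h1γ).congr' ?_
  filter_upwards [self_mem_nhdsWithin] with γ (hγ : 0 < γ)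
  simp only [Function.comp_apply]
  rw [div_div_eq_mul_div, div_one, mul_comm x γ]
end

section
/- Let α > 0 and F̄(x) = ½(x^{-α} + x^{-2α}) for x ≥ 1. With b(t) = F̄^←(1/t) = 2^{1/α}(√(1+8/t) − 1)^{-1/α} and A(t) = t^{-α}, for every x > 0: lim_{t→∞} [t·F̄(b(t)x) − x^{-α}] / A(b(t)) = x^{-α}(x^{-α} − 1). -/
open Filter Real

private lemma halfSum_aux (v X : ℝ) (hv : 0 < v) :
    ((2 / (v * (1 + v))) * ((1:ℝ) / 2 * (v * X + (v * X) ^ 2)) - X) / v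
      = (X ^ 2 - X) / (1 + v) := by
  have h1 : (0:ℝ) < 1 + v := by linarith
  field_simp
  ring

/-- F̄(x) = ½(x^{-α}+x^{-2α}) is second-order regularly varying with
indices (−α, −α), b(t) = F̄^←(1/t), A(t) = t^{-α}. -/
theorem halfSum_2RV (α : ℝ) (hα : 0 < α)
    (Fbar : ℝ → ℝ) (hF : ∀ y : ℝ, 1 ≤ y → Fbar y = (1 / 2) * (y ^ (-α) + y ^ (-2 * α)))
    (b : ℝ → ℝ)
    (hb : ∀ t : ℝ, b t = 2 ^ (1 / α) * (Real.sqrt (1 + 8 / t) - 1) ^ (-(1 / α)))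
    (x : ℝ) (hx : 0 < x) :
    Tendsto (fun t : ℝ => (t * Fbar (b t * x) - x ^ (-α)) / (b t) ^ (-α))
      atTop (nhds (x ^ (-α) * (x ^ (-α) - 1))) := by
  have hα' : α ≠ 0 := hα.ne'
  set X := x ^ (-α) with hX
  set u : ℝ → ℝ := fun t => (Real.sqrt (1 + 8 / t) - 1) / 2 with hu_def
  -- u tends to 0
  have h8 : Tendsto (fun t : ℝ => 1 + 8 / t) atTop (nhds 1) := by
    have : Tendsto (fun t : ℝ => 8 / t) atTop (nhds 0) :=
      Tendsto.div_atTop tendsto_const_nhds tendsto_id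
    simpa using tendsto_const_nhds.add this
  have hu0 : Tendsto u atTop (nhds 0) := by
    have hsq : Tendsto (fun t : ℝ => Real.sqrt (1 + 8 / t)) atTop (nhds 1) := by
      have := (Real.continuous_sqrt.continuousAt (x := (1:ℝ))).tendsto.comp h8
      simpa [Function.comp_def] using this
    have : Tendsto (fun t : ℝ => (Real.sqrt (1 + 8 / t) - 1) / 2) atTop (nhds ((1 - 1) / 2)) :=
      (hsq.sub tendsto_const_nhds).div_const 2
    simpa [hu_def] using this
  have hupos : ∀ t : ℝ, 0 < t → 0 < u t := by
    intro t ht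
    have h1 : (1 : ℝ) < 1 + 8 / t := by
      have : 0 < 8 / t := by positivity
      linarith
    have : (1 : ℝ) < Real.sqrt (1 + 8 / t) := by
      have := Real.sqrt_lt_sqrt (by norm_num : (0:ℝ) ≤ 1) h1
      simpa using this
    simp only [hu_def]
    linarith
  have hrel : ∀ t : ℝ, 0 < t → u t + (u t) ^ 2 = 2 / t := by
    intro t ht
    have hs : Real.sqrt (1 + 8 / t) ^ 2 = 1 + 8 / t :=
      Real.sq_sqrt (by positivity)
    have h1 : u t + (u t) ^ 2 = (Real.sqrt (1 + 8 / t) ^ 2 - 1) / 4 := by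
      simp only [hu_def]; ring
    rw [h1, hs]; ring
  have hbu : ∀ t : ℝ, 0 < t → b t = (u t) ^ (-(1 / α)) := by
    intro t ht
    rw [hb]
    have h2u : Real.sqrt (1 + 8 / t) - 1 = 2 * u t := by
      simp only [hu_def]; ring
    rw [h2u, Real.mul_rpow (by norm_num) (hupos t ht).le, ← mul_assoc,
      ← Real.rpow_add two_pos]
    simp
  have hbua : ∀ t : ℝ, 0 < t → (b t) ^ (-α) = u t := by
    intro t ht
    rw [hbu t ht, ← Real.rpow_mul (hupos t ht).le,
      show -(1 / α) * -α = 1 by field_simp, Real.rpow_one]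
  have hbpos : ∀ t : ℝ, 0 < t → 0 < b t := by
    intro t ht
    rw [hbu t ht]
    exact Real.rpow_pos_of_pos (hupos t ht) _
  have hxα : 0 < x ^ α := Real.rpow_pos_of_pos hx α
  have hev : ∀ᶠ t in atTop,
      (t * Fbar (b t * x) - X) / (b t) ^ (-α) = (X ^ 2 - X) / (1 + u t) := by
    filter_upwards [eventually_gt_atTop 0, hu0.eventually (Iio_mem_nhds hxα)]
      with t ht htu
    have hut := hupos t ht
    have hb1 : 1 ≤ b t * x := by
      have h1 : (x ^ α) ^ (-(1 / α)) < (u t) ^ (-(1 / α)) :=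
        Real.rpow_lt_rpow_of_neg hut htu (by simp [one_div]; positivity)
      have h2 : (x ^ α) ^ (-(1 / α)) = x⁻¹ := by
        rw [← Real.rpow_mul hx.le, show α * -(1 / α) = -1 by field_simp,
          Real.rpow_neg_one]
      have h3 : x⁻¹ < b t := by rw [← h2, hbu t ht]; exact h1
      have := mul_lt_mul_of_pos_right h3 hx
      rw [inv_mul_cancel₀ hx.ne'] at this
      exact this.le
    have hbxpos : (0:ℝ) ≤ b t * x := (mul_pos (hbpos t ht) hx).le
    have hbx1 : (b t * x) ^ (-α) = u t * X := by
      rw [Real.mul_rpow (hbpos t ht).le hx.le, hbua t ht, hX]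
    have hbx2 : (b t * x) ^ (-2 * α) = (u t * X) ^ 2 := by
      rw [show (-2 * α) = -α * 2 by ring, Real.rpow_mul hbxpos, hbx1,
        ← Real.rpow_natCast (u t * X) 2]
      norm_num
    rw [hF (b t * x) hb1, hbua t ht, hbx1, hbx2]
    have h1u : (0:ℝ) < 1 + u t := by linarith
    have htval : t = 2 / (u t * (1 + u t)) := by
      have h := hrel t ht
      have h2 : t * (u t + u t ^ 2) = 2 := by
        rw [h]; field_simp
      rw [eq_div_iff (by positivity : u t * (1 + u t) ≠ 0)]
      linear_combination h2
    nth_rewrite 1 [htval]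
    exact halfSum_aux (u t) X hut
  have hlim : Tendsto (fun t => (X ^ 2 - X) / (1 + u t)) atTop (nhds (X ^ 2 - X)) := by
    have : Tendsto (fun t => (X ^ 2 - X) / (1 + u t)) atTop
        (nhds ((X ^ 2 - X) / (1 + 0))) :=
      tendsto_const_nhds.div (tendsto_const_nhds.add hu0) (by norm_num)
    simpa using this
  rw [show X * (X - 1) = X ^ 2 - X by ring]
  exact Tendsto.congr' (Filter.EventuallyEq.symm hev) hlim
end

section
/- Let α > 0 and F̄(x) = ½(x^{-α} + x^{-2α}) for x ≥ 1, b(t) = 2^{1/α}(√(1+8/t)−1)^{-1/α}, A(t) = t^{-α}. Then for every x > 0, lim_{γ↓0} [F̄^←(γx)/b(1/γ) − x^{-1/α}] / A(b(1/γ)) = (1/α)·x^{-1/α}(x − 1). -/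
open Filter Real Topology

set_option maxHeartbeats 1600000

/-- Quantile-level second-order expansion for F̄(x) = ½(x^{-α}+x^{-2α}), with
quantile function F̄^←(p) = 2^{1/α}(√(1+8p)−1)^{-1/α}, b(t) = F̄^←(1/t), A(t) = t^{-α}. -/
theorem halfSum_quantile_expansion (α : ℝ) (hα : 0 < α)
    (Finv : ℝ → ℝ)
    (hFinv : ∀ p : ℝ, 0 < p → p < 1 →
      Finv p = 2 ^ (1 / α) * (Real.sqrt (1 + 8 * p) - 1) ^ (-(1 / α)))
    (b : ℝ → ℝ)
    (hb : ∀ t : ℝ, b t = 2 ^ (1 / α) * (Real.sqrt (1 + 8 / t) - 1) ^ (-(1 / α)))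
    (x : ℝ) (hx : 0 < x) :
    Tendsto (fun γ : ℝ => (Finv (γ * x) / b (1 / γ) - x ^ (-(1 / α))) / (b (1 / γ)) ^ (-α))
      (𝓝[>] 0) (nhds ((1 / α) * x ^ (-(1 / α)) * (x - 1))) := by
  have hα' : α ≠ 0 := hα.ne'
  set c : ℝ := -(1/α) with hc
  set Φ : ℝ → ℝ := fun γ =>
    (x * (Real.sqrt (1 + 8*γ) + 1) / (Real.sqrt (1 + 8*γ*x) + 1)) ^ c with hΦdef
  have hΦ0 : Φ 0 = x ^ c := by
    simp only [hΦdef]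
    norm_num [Real.sqrt_one]
  -- derivative of Φ at 0
  have hderiv : HasDerivAt Φ ((2/α) * x ^ c * (x - 1)) 0 := by
    have h1 : HasDerivAt (fun γ : ℝ => Real.sqrt (1 + 8*γ)) 4 0 := by
      have hin : HasDerivAt (fun γ : ℝ => 1 + 8*γ) 8 0 := by
        simpa using ((hasDerivAt_id (0:ℝ)).const_mul 8).const_add 1
      have := hin.sqrt (by norm_num)
      norm_num [Real.sqrt_one] at this
      convert this using 1
    have h2 : HasDerivAt (fun γ : ℝ => Real.sqrt (1 + 8*γ*x)) (4*x) 0 := by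
      have hin : HasDerivAt (fun γ : ℝ => 1 + 8*γ*x) (8*x) 0 := by
        have : HasDerivAt (fun γ : ℝ => (8*x)*γ) (8*x) 0 := by
          simpa using (hasDerivAt_id (0:ℝ)).const_mul (8*x)
        have := this.const_add 1
        rw [show (fun γ : ℝ => 1 + 8*γ*x) = fun γ => 1 + 8*x*γ from funext fun γ => by ring]
        exact this
      have := hin.sqrt (by norm_num)
      norm_num [Real.sqrt_one] at this
      convert this using 1
      ring
    have hnum : HasDerivAt (fun γ : ℝ => x * (Real.sqrt (1 + 8*γ) + 1)) (x*4) 0 :=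
      (h1.add_const 1).const_mul x
    have hden : HasDerivAt (fun γ : ℝ => Real.sqrt (1 + 8*γ*x) + 1) (4*x) 0 :=
      h2.add_const 1
    have hden0 : Real.sqrt (1 + 8*0*x) + 1 ≠ 0 := by
      norm_num [Real.sqrt_one]
    have hr : HasDerivAt (fun γ : ℝ => x * (Real.sqrt (1 + 8*γ) + 1) / (Real.sqrt (1 + 8*γ*x) + 1))
        ((x*4*(Real.sqrt (1 + 8*0*x) + 1) - x*(Real.sqrt (1 + 8*0) + 1)*(4*x)) / (Real.sqrt (1 + 8*0*x) + 1)^2) 0 :=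
      hnum.div hden hden0
    have hr0 : x * (Real.sqrt (1 + 8*0) + 1) / (Real.sqrt (1 + 8*0*x) + 1) = x := by
      norm_num [Real.sqrt_one]
    have hΦd := hr.rpow_const (p := c) (Or.inl (by rw [hr0]; exact hx.ne'))
    rw [hr0] at hΦd
    convert hΦd using 1
    have hxc : x ^ (c - 1) = x ^ c / x := Real.rpow_sub_one hx.ne' c
    norm_num [Real.sqrt_one, hxc]
    field_simp
    rw [hc]
    field_simp
    ring
  -- slope limit
  have hslope : Tendsto (fun γ : ℝ => (Φ γ - Φ 0)/γ) (𝓝[>] 0)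
      (𝓝 ((2/α) * x ^ c * (x - 1))) := by
    have := hasDerivAt_iff_tendsto_slope.mp hderiv
    have h := this.mono_left (nhdsWithin_mono 0 (by intro y hy; exact ne_of_gt hy))
    refine h.congr fun γ => ?_
    rw [slope_def_field]
    norm_num
  have hfac : Tendsto (fun γ : ℝ => (Real.sqrt (1 + 8*γ) + 1)/4) (𝓝[>] 0) (𝓝 (1/2)) := by
    have hcont : Continuous (fun γ : ℝ => (Real.sqrt (1 + 8*γ) + 1)/4) := by
      continuity
    have h : Tendsto (fun γ : ℝ => (Real.sqrt (1 + 8*γ) + 1)/4) (𝓝[>] (0:ℝ))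
        (𝓝 ((Real.sqrt (1 + 8*0) + 1)/4)) := (hcont.tendsto 0).mono_left nhdsWithin_le_nhds
    norm_num [Real.sqrt_one] at h
    convert h using 2
  have hmul := hslope.mul hfac
  have hlim : (2/α) * x ^ c * (x - 1) * (1/2) = (1/α) * x ^ c * (x-1) := by ring
  rw [hlim] at hmul
  refine hmul.congr' ?_
  filter_upwards [Ioo_mem_nhdsGT_of_mem (Set.left_mem_Ico.2 (by positivity : (0:ℝ) < 1/x))]
    with γ hγ
  obtain ⟨hγ0, hγx⟩ := hγ
  have hγx1 : γ * x < 1 := (lt_div_iff₀ hx).mp hγx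
  have hγ0' : γ ≠ 0 := hγ0.ne'
  set s := Real.sqrt (1 + 8*γ) with hs
  set sx := Real.sqrt (1 + 8*(γ*x)) with hsx
  have hs2 : s^2 = 1 + 8*γ := Real.sq_sqrt (by linarith)
  have hsx2 : sx^2 = 1 + 8*(γ*x) := Real.sq_sqrt (by positivity)
  have hs1 : 1 < s := by
    have h := Real.sqrt_lt_sqrt (by norm_num : (0:ℝ) ≤ 1) (by linarith : (1:ℝ) < 1 + 8*γ)
    simpa [hs] using h
  have hsx1 : 1 < sx := by
    have h8x : (1:ℝ) < 1 + 8*(γ*x) := by nlinarith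
    have h := Real.sqrt_lt_sqrt (by norm_num : (0:ℝ) ≤ 1) h8x
    simpa [hsx] using h
  have hs1' : (0:ℝ) < s - 1 := by linarith
  have hsx1' : (0:ℝ) < sx - 1 := by linarith
  have h2pos : (0:ℝ) < (2:ℝ) ^ (1/α) := Real.rpow_pos_of_pos (by norm_num) _
  -- rewrite Finv and b
  rw [hFinv (γ*x) (by positivity) hγx1, hb (1/γ)]
  have h8 : 8 / (1/γ) = 8 * γ := by field_simp
  rw [h8, ← hs, ← hsx]
  -- ratio simplification
  have hratio : (2:ℝ) ^ (1/α) * (sx - 1) ^ c / ((2:ℝ) ^ (1/α) * (s - 1) ^ c)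
      = (x * (s + 1) / (sx + 1)) ^ c := by
    rw [mul_div_mul_left _ _ h2pos.ne', ← Real.div_rpow hsx1'.le hs1'.le]
    congr 1
    rw [div_eq_div_iff hs1'.ne' (by positivity)]
    nlinarith [hs2, hsx2]
  -- denominator simplification
  have hdenom : ((2:ℝ) ^ (1/α) * (s - 1) ^ c) ^ (-α) = (s - 1) / 2 := by
    rw [Real.mul_rpow h2pos.le (by positivity),
      ← Real.rpow_mul (by norm_num : (0:ℝ) ≤ 2), ← Real.rpow_mul hs1'.le]
    have e1 : (1/α) * (-α) = -1 := by field_simp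
    have e2 : c * (-α) = 1 := by rw [hc]; field_simp
    rw [e1, e2, Real.rpow_neg_one, Real.rpow_one]
    ring
  have hΦγ : Φ γ = (x * (s + 1) / (sx + 1)) ^ c := by
    simp only [hΦdef, hs, hsx]
    rw [show (1:ℝ) + 8*γ*x = 1 + 8*(γ*x) from by ring]
  rw [hratio, hdenom, hΦγ, hΦ0]
  have key : (s+1)*(s-1) = 8*γ := by nlinarith [hs2]
  field_simp
  linear_combination ((x * (s + 1) / (sx + 1)) ^ c - x ^ c) * key
end

section
/- In the Pareto–Lomax/survival-Clayton model with αθ = 1 (joint survival P(X₁>x₁,X₂>x₂) = (1+x₁+x₂)^{-α}, α > 1), with b(t)=t^{1/α}−1 and A(t)=−(t+1)^{-1}: for x₁,x₂ > 0, lim_{t→∞} [t·P((X₁,X₂)/b(t) ∈ ([0,x₁]×[0,x₂])^c) − (x₁^{-α}+x₂^{-α}−(x₁+x₂)^{-α})] / A(b(t)) = α[(x₁+x₂)^{-(α+1)}(x₁+x₂−1) − x₁^{-(α+1)}(x₁−1) − x₂^{-(α+1)}(x₂−1)]. -/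
open Filter Real MeasureTheory




lemma aux_deriv_lim (α x c : ℝ) (hx : 0 < x) :
    Tendsto (fun s : ℝ => s * ((x + c / s) ^ (-α) - x ^ (-α))) atTop
      (nhds (c * (-α * x ^ (-α - 1)))) := by
  have hd : HasDerivAt (fun ε : ℝ => (x + ε) ^ (-α)) (-α * x ^ (-α - 1)) 0 := by
    have h1 : HasDerivAt (fun y : ℝ => y ^ (-α)) (-α * x ^ (-α - 1)) x :=
      Real.hasDerivAt_rpow_const (Or.inl hx.ne')
    have h2 : HasDerivAt (fun ε : ℝ => x + ε) 1 0 := (hasDerivAt_id 0).const_add x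
    have h1' : HasDerivAt (fun y : ℝ => y ^ (-α)) (-α * x ^ (-α - 1)) ((fun ε : ℝ => x + ε) 0) := by
      simpa using h1
    have h3 := HasDerivAt.comp 0 h1' h2
    simpa [Function.comp_def] using h3
  rcases eq_or_ne c 0 with rfl | hc
  · simp only [zero_div, add_zero, sub_self, mul_zero, zero_mul]
    exact tendsto_const_nhds
  · have hslope := hasDerivAt_iff_tendsto_slope.mp hd
    have hcs : Tendsto (fun s : ℝ => c / s) atTop (nhdsWithin (0:ℝ) {(0:ℝ)}ᶜ) := by
      rw [tendsto_nhdsWithin_iff]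
      constructor
      · simpa using tendsto_const_nhds.div_atTop (tendsto_id (α := ℝ))
      · filter_upwards [eventually_gt_atTop (0:ℝ)] with s hs
        simp [div_ne_zero hc hs.ne']
    have key := (hslope.comp hcs).const_mul c
    refine key.congr' ?_
    filter_upwards [eventually_gt_atTop (0:ℝ)] with s hs
    have hcs0 : c / s ≠ 0 := div_ne_zero hc hs.ne'
    simp only [Function.comp, slope_def_field, add_zero, sub_zero]
    field_simp



lemma union_prob {Ω : Type*} [MeasurableSpace Ω] (μ : Measure Ω)
    [IsProbabilityMeasure μ] (α : ℝ)
    (X₁ X₂ : Ω → ℝ) (hm₁ : Measurable X₁) (hm₂ : Measurable X₂)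
    (hjoint : ∀ x₁ x₂ : ℝ, 0 ≤ x₁ → 0 ≤ x₂ →
      (μ {ω | x₁ < X₁ ω ∧ x₂ < X₂ ω}).toReal = (1 + x₁ + x₂) ^ (-α))
    (a₁ a₂ : ℝ) (h₁ : 0 ≤ a₁) (h₂ : 0 ≤ a₂) :
    (μ {ω | a₁ < X₁ ω ∨ a₂ < X₂ ω}).toReal
      = (1 + a₁) ^ (-α) + (1 + a₂) ^ (-α) - (1 + a₁ + a₂) ^ (-α) := by
  set A := {ω | a₁ < X₁ ω} with hA_def
  set B := {ω | a₂ < X₂ ω} with hB_def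
  have hA : MeasurableSet A := hm₁ measurableSet_Ioi
  have hB : MeasurableSet B := hm₂ measurableSet_Ioi
  have hC₁ : MeasurableSet {ω | 0 < X₁ ω} := hm₁ measurableSet_Ioi
  have hC₂ : MeasurableSet {ω | 0 < X₂ ω} := hm₂ measurableSet_Ioi
  -- the event {0 < X₁ ∧ 0 < X₂} has full measure
  have hS : μ {ω | 0 < X₁ ω ∧ 0 < X₂ ω} = 1 := by
    have h := hjoint 0 0 le_rfl le_rfl
    simp only [add_zero] at h
    rw [Real.one_rpow] at h
    have hne : μ {ω | 0 < X₁ ω ∧ 0 < X₂ ω} ≠ ⊤ := measure_ne_top _ _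
    rw [← ENNReal.ofReal_toReal hne, h]; simp
  have hSm : MeasurableSet {ω | 0 < X₁ ω ∧ 0 < X₂ ω} := hC₁.inter hC₂
  have hScompl : μ {ω | 0 < X₁ ω ∧ 0 < X₂ ω}ᶜ = 0 := by
    rw [measure_compl hSm (measure_ne_top _ _), hS]
    simp
  have hN₁ : μ {ω | ¬ 0 < X₁ ω} = 0 := by
    refine measure_mono_null ?_ hScompl
    intro ω hω; simp only [Set.mem_compl_iff, Set.mem_setOf_eq] at *; tauto
  have hN₂ : μ {ω | ¬ 0 < X₂ ω} = 0 := by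
    refine measure_mono_null ?_ hScompl
    intro ω hω; simp only [Set.mem_compl_iff, Set.mem_setOf_eq] at *; tauto
  -- marginals
  have hμA : (μ A).toReal = (1 + a₁) ^ (-α) := by
    have hdiff : μ (A \ {ω | 0 < X₂ ω}) = 0 := by
      refine measure_mono_null ?_ hN₂
      intro ω hω; exact hω.2
    have := measure_inter_add_diff (μ := μ) A hC₂
    have hAi : μ (A ∩ {ω | 0 < X₂ ω}) = μ A := by
      rw [← this, hdiff, add_zero]
    have hj := hjoint a₁ 0 h₁ le_rfl
    simp only [add_zero] at hj
    have hset : {ω | a₁ < X₁ ω ∧ 0 < X₂ ω} = A ∩ {ω | 0 < X₂ ω} := rfl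
    rw [hset, hAi] at hj
    exact hj
  have hμB : (μ B).toReal = (1 + a₂) ^ (-α) := by
    have hdiff : μ (B \ {ω | 0 < X₁ ω}) = 0 := by
      refine measure_mono_null ?_ hN₁
      intro ω hω; exact hω.2
    have := measure_inter_add_diff (μ := μ) B hC₁
    have hBi : μ (B ∩ {ω | 0 < X₁ ω}) = μ B := by
      rw [← this, hdiff, add_zero]
    have hj := hjoint 0 a₂ le_rfl h₂
    have hset : {ω | 0 < X₁ ω ∧ a₂ < X₂ ω} = B ∩ {ω | 0 < X₁ ω} := by
      ext ω; simp only [Set.mem_setOf_eq, Set.mem_inter_iff]; tauto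
    rw [hset, hBi] at hj
    rw [hj]; ring_nf
  have hμAB : (μ (A ∩ B)).toReal = (1 + a₁ + a₂) ^ (-α) := hjoint a₁ a₂ h₁ h₂
  have hU : {ω | a₁ < X₁ ω ∨ a₂ < X₂ ω} = A ∪ B := rfl
  have hie := measure_union_add_inter (μ := μ) A hB
  have hie' : (μ (A ∪ B)).toReal + (μ (A ∩ B)).toReal = (μ A).toReal + (μ B).toReal := by
    rw [← ENNReal.toReal_add (measure_ne_top _ _) (measure_ne_top _ _),
        ← ENNReal.toReal_add (measure_ne_top _ _) (measure_ne_top _ _), hie]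
  rw [hU]
  rw [hμA, hμB, hμAB] at hie'
  linarith


/-- Pareto–Lomax/survival-Clayton model with αθ = 1: second-order multivariate
regular variation limit H, with b(t) = t^{1/α} − 1 and A(t) = −(t+1)⁻¹, so that
A(b(t)) = −(t^{1/α})⁻¹. -/
theorem paretoLomaxClayton_2MRV {Ω : Type*} [MeasurableSpace Ω] (μ : Measure Ω)
    [IsProbabilityMeasure μ]
    (α : ℝ) (hα : 1 < α)
    (X₁ X₂ : Ω → ℝ) (hm₁ : Measurable X₁) (hm₂ : Measurable X₂)
    (hpos₁ : ∀ ω, 0 ≤ X₁ ω) (hpos₂ : ∀ ω, 0 ≤ X₂ ω)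
    (hjoint : ∀ x₁ x₂ : ℝ, 0 ≤ x₁ → 0 ≤ x₂ →
      (μ {ω | x₁ < X₁ ω ∧ x₂ < X₂ ω}).toReal = (1 + x₁ + x₂) ^ (-α))
    (x₁ x₂ : ℝ) (hx₁ : 0 < x₁) (hx₂ : 0 < x₂) :
    Tendsto (fun t : ℝ =>
        (t * (μ {ω | (t ^ (1 / α) - 1) * x₁ < X₁ ω ∨
            (t ^ (1 / α) - 1) * x₂ < X₂ ω}).toReal
          - (x₁ ^ (-α) + x₂ ^ (-α) - (x₁ + x₂) ^ (-α)))
        / (-(1 + (t ^ (1 / α) - 1))⁻¹))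
      atTop (nhds (α * ((x₁ + x₂) ^ (-(α + 1)) * (x₁ + x₂ - 1)
        - x₁ ^ (-(α + 1)) * (x₁ - 1) - x₂ ^ (-(α + 1)) * (x₂ - 1)))) := by
  have hα0 : (0:ℝ) < α := by linarith
  have h1 := aux_deriv_lim α x₁ (1 - x₁) hx₁
  have h2 := aux_deriv_lim α x₂ (1 - x₂) hx₂
  have h3 := aux_deriv_lim α (x₁ + x₂) (1 - (x₁ + x₂)) (by linarith)
  have hG : Tendsto (fun s : ℝ =>
      (-(s * ((x₁ + (1 - x₁) / s) ^ (-α) - x₁ ^ (-α)))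
        - s * ((x₂ + (1 - x₂) / s) ^ (-α) - x₂ ^ (-α)))
        + s * (((x₁ + x₂) + (1 - (x₁ + x₂)) / s) ^ (-α) - (x₁ + x₂) ^ (-α)))
      atTop (nhds (α * ((x₁ + x₂) ^ (-(α + 1)) * (x₁ + x₂ - 1)
        - x₁ ^ (-(α + 1)) * (x₁ - 1) - x₂ ^ (-(α + 1)) * (x₂ - 1)))) := by
    have h := (h1.neg.sub h2).add h3
    convert h using 2
    rw [show -(α + 1) = -α - 1 by ring]
    ring
  have hsfun : Tendsto (fun t : ℝ => t ^ (1 / α)) atTop atTop :=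
    tendsto_rpow_atTop (by positivity)
  have hcomp := hG.comp hsfun
  refine hcomp.congr' ?_
  filter_upwards [eventually_gt_atTop (1:ℝ)] with t ht
  have ht0 : (0:ℝ) < t := by linarith
  set s := t ^ (1 / α) with hs_def
  have hs1 : 1 < s := by
    rw [hs_def]
    exact (Real.one_lt_rpow_iff_of_pos ht0).mpr (Or.inl ⟨ht, by positivity⟩)
  have hs0 : (0:ℝ) < s := by linarith
  have hts : s ^ α = t := by
    rw [hs_def, ← Real.rpow_mul ht0.le, one_div, inv_mul_cancel₀ (ne_of_gt hα0),
      Real.rpow_one]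
  have key : ∀ x : ℝ, 0 < x → t * (1 + (s - 1) * x) ^ (-α) = (x + (1 - x) / s) ^ (-α) := by
    intro x hx
    have hnum : 0 < 1 + (s - 1) * x := by nlinarith
    have heq : 1 + (s - 1) * x = s * (x + (1 - x) / s) := by
      field_simp; ring
    have h2 : 0 < x + (1 - x) / s := by
      have : x + (1 - x) / s = (1 + (s - 1) * x) / s := by field_simp; ring
      rw [this]; positivity
    calc t * (1 + (s - 1) * x) ^ (-α)
        = s ^ α * ((s * (x + (1 - x) / s)) ^ (-α)) := by rw [hts, heq]
      _ = s ^ α * (s ^ (-α) * (x + (1 - x) / s) ^ (-α)) := by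
          rw [Real.mul_rpow hs0.le h2.le]
      _ = (s ^ α * s ^ (-α)) * (x + (1 - x) / s) ^ (-α) := by ring
      _ = (x + (1 - x) / s) ^ (-α) := by
          rw [← Real.rpow_add hs0]; simp
  simp only [Function.comp]
  rw [union_prob μ α X₁ X₂ hm₁ hm₂ hjoint ((s - 1) * x₁) ((s - 1) * x₂)
    (mul_nonneg (by linarith) hx₁.le) (mul_nonneg (by linarith) hx₂.le)]
  have e₁ := key x₁ hx₁
  have e₂ := key x₂ hx₂
  have e₃ : t * (1 + (s - 1) * x₁ + (s - 1) * x₂) ^ (-α)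
      = ((x₁ + x₂) + (1 - (x₁ + x₂)) / s) ^ (-α) := by
    rw [show 1 + (s - 1) * x₁ + (s - 1) * x₂ = 1 + (s - 1) * (x₁ + x₂) by ring]
    exact key (x₁ + x₂) (by linarith)
  rw [← hs_def, show (1:ℝ) + (s - 1) = s by ring]
  have hR : t * ((1 + (s - 1) * x₁) ^ (-α) + (1 + (s - 1) * x₂) ^ (-α)
      - (1 + (s - 1) * x₁ + (s - 1) * x₂) ^ (-α))
      = (x₁ + (1 - x₁) / s) ^ (-α) + (x₂ + (1 - x₂) / s) ^ (-α)
        - (x₁ + x₂ + (1 - (x₁ + x₂)) / s) ^ (-α) := by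
    rw [mul_sub, mul_add, e₁, e₂, e₃]
  rw [hR]
  field_simp
  ring
end

section
/- In the hidden regular variation mixture model (margins F̄(x) = ¼x^{-α} + ½x^{-2α}, joint tail P(X ∈ ([0,x₁]×[0,x₂])^c) = ¼(x₁^{-α}+x₂^{-α}) + ½min(x₁,x₂)^{-2α}), with b(t) = F̄^←(1/t) and A(t) = 2t^{-α}: for all x₁,x₂ > 0, lim_{t→∞} [t·P((X₁,X₂)/b(t) ∈ ([0,x₁]×[0,x₂])^c) − (x₁^{-α}+x₂^{-α})] / A(b(t)) = −(x₁^{-α}+x₂^{-α}) + min(x₁,x₂)^{-2α}. -/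
open Filter Real MeasureTheory

/-- Second-order multivariate regular variation in the hidden regular variation
mixture model: with b(t) = F̄^←(1/t) = 4^{1/α}(√(1+32/t) − 1)^{-1/α} and
A(t) = 2t^{-α}, the normalized joint tail converges to
H(x₁,x₂) = −(x₁^{-α}+x₂^{-α}) + min(x₁,x₂)^{-2α}. -/
theorem hrv_mixture_2MRV {Ω : Type*} [MeasurableSpace Ω] (μ : Measure Ω)
    [IsProbabilityMeasure μ]
    (α : ℝ) (hα : 0 < α)
    (X₁ X₂ : Ω → ℝ) (hm₁ : Measurable X₁) (hm₂ : Measurable X₂)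
    (hpos₁ : ∀ ω, 0 ≤ X₁ ω) (hpos₂ : ∀ ω, 0 ≤ X₂ ω)
    (hjoint : ∀ x₁ x₂ : ℝ, 1 < x₁ → 1 < x₂ →
      (μ {ω | x₁ < X₁ ω ∨ x₂ < X₂ ω}).toReal
        = (1 / 4) * (x₁ ^ (-α) + x₂ ^ (-α)) + (1 / 2) * (min x₁ x₂) ^ (-(2 * α)))
    (hmarg : ∀ x : ℝ, 1 < x →
      (μ {ω | x < X₁ ω}).toReal = (1 / 4) * x ^ (-α) + (1 / 2) * x ^ (-(2 * α)))
    (b : ℝ → ℝ)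
    (hb : ∀ t : ℝ, b t = 4 ^ (1 / α) * (Real.sqrt (1 + 32 / t) - 1) ^ (-(1 / α)))
    (x₁ x₂ : ℝ) (hx₁ : 0 < x₁) (hx₂ : 0 < x₂) :
    Tendsto (fun t : ℝ =>
        (t * (μ {ω | b t * x₁ < X₁ ω ∨ b t * x₂ < X₂ ω}).toReal
          - (x₁ ^ (-α) + x₂ ^ (-α))) / (2 * (b t) ^ (-α)))
      atTop (nhds (-(x₁ ^ (-α) + x₂ ^ (-α)) + (min x₁ x₂) ^ (-(2 * α)))) := by
  have hα' : α ≠ 0 := hα.ne'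
  set s : ℝ → ℝ := fun t => Real.sqrt (1 + 32 / t) with hsdef
  set A : ℝ := x₁ ^ (-α) with hA
  set B : ℝ := x₂ ^ (-α) with hB
  set C : ℝ := (min x₁ x₂) ^ (-(2 * α)) with hC
  -- limit of s
  have hs_lim : Tendsto s atTop (nhds 1) := by
    have h1 : Tendsto (fun t : ℝ => 1 + 32 / t) atTop (nhds 1) := by
      have h2 : Tendsto (fun t : ℝ => 32 / t) atTop (nhds 0) :=
        tendsto_const_nhds.div_atTop tendsto_id
      simpa using (tendsto_const_nhds (x := (1:ℝ))).add h2
    have := (Real.continuous_sqrt.continuousAt (x := (1:ℝ))).tendsto.comp h1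
    simpa [hsdef, Function.comp_def] using this
  -- eventually 1 < s t
  have hs_gt : ∀ t : ℝ, 0 < t → 1 < s t := by
    intro t ht
    have h32 : (0:ℝ) < 32 / t := by positivity
    have h2 : (1:ℝ) ^ 2 < 1 + 32 / t := by nlinarith
    exact (Real.lt_sqrt (by norm_num)).mpr h2
  -- u := s t - 1 tends to 0 within Ioi
  have hu_lim : Tendsto (fun t => s t - 1) atTop (nhdsWithin 0 (Set.Ioi 0)) := by
    rw [tendsto_nhdsWithin_iff]
    constructor
    · simpa using hs_lim.sub (tendsto_const_nhds (x := (1:ℝ)))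
    · filter_upwards [eventually_gt_atTop (0:ℝ)] with t ht
      exact Set.mem_Ioi.2 (by linarith [hs_gt t ht])
  -- b tends to atTop
  have hb_top : Tendsto b atTop atTop := by
    have hpow : Tendsto (fun y : ℝ => y ^ (-(1/α))) (nhdsWithin 0 (Set.Ioi 0)) atTop := by
      have h1 : Tendsto (fun y : ℝ => (y⁻¹) ^ (1/α)) (nhdsWithin 0 (Set.Ioi 0)) atTop :=
        (tendsto_rpow_atTop (show (0:ℝ) < 1/α by positivity)).comp tendsto_inv_nhdsGT_zero
      refine h1.congr' ?_
      filter_upwards [eventually_mem_nhdsWithin] with y (hy : y ∈ Set.Ioi 0)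
      have hy0 : (0:ℝ) < y := hy
      rw [Real.inv_rpow hy0.le, Real.rpow_neg hy0.le]
    have h2 : Tendsto (fun t => (s t - 1) ^ (-(1/α))) atTop atTop := hpow.comp hu_lim
    have h3 : Tendsto (fun t => (4:ℝ) ^ (1/α) * (s t - 1) ^ (-(1/α))) atTop atTop :=
      h2.const_mul_atTop (by positivity)
    exact h3.congr fun t => (hb t).symm
  -- limit of t * (s t - 1)
  have hts_lim : Tendsto (fun t => t * (s t - 1)) atTop (nhds 16) := by
    have h1 : Tendsto (fun t => 32 / (s t + 1)) atTop (nhds 16) := by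
      have h0 : Tendsto (fun t => s t + 1) atTop (nhds ((1:ℝ) + 1)) :=
        hs_lim.add (tendsto_const_nhds (x := (1:ℝ)))
      have := (tendsto_const_nhds (x := (32:ℝ))).div h0 (by norm_num)
      norm_num at this
      exact this
    refine h1.congr' ?_
    filter_upwards [eventually_gt_atTop (0:ℝ)] with t ht
    have hsq : s t ^ 2 = 1 + 32 / t := Real.sq_sqrt (by positivity)
    have hsq2 : t * s t ^ 2 = t + 32 := by field_simp at hsq; linarith
    have hs1 : s t + 1 ≠ 0 := by nlinarith [hs_gt t ht]
    rw [div_eq_iff hs1]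
    linear_combination -hsq2
  -- goal limit value
  have hval : -(A + B) + C = (C - (A + B)) * 1 := by ring
  rw [hval]
  have hlim : Tendsto (fun t => (C - (A + B)) * (t * (s t - 1) / 16)) atTop
      (nhds ((C - (A + B)) * 1)) := by
    have h16 : Tendsto (fun t => t * (s t - 1) / 16) atTop (nhds 1) := by
      have := hts_lim.div_const 16
      norm_num at this
      exact this
    exact tendsto_const_nhds.mul h16
  refine hlim.congr' ?_
  -- eventual equality
  filter_upwards [eventually_gt_atTop (0:ℝ), hb_top.eventually_gt_atTop (1/x₁),
    hb_top.eventually_gt_atTop (1/x₂)] with t ht hb1 hb2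
  have hu : 0 < s t - 1 := by linarith [hs_gt t ht]
  have hb0 : 0 < b t := by rw [hb t]; positivity
  have hbx1 : 1 < b t * x₁ := by rw [div_lt_iff₀ hx₁] at hb1; linarith
  have hbx2 : 1 < b t * x₂ := by rw [div_lt_iff₀ hx₂] at hb2; linarith
  -- key: (b t)^(-α) = (s t - 1)/4
  have hy : (b t) ^ (-α) = (s t - 1) / 4 := by
    rw [hb t, Real.mul_rpow (by positivity) (by positivity),
      ← Real.rpow_mul (by norm_num : (0:ℝ) ≤ 4), ← Real.rpow_mul hu.le]
    rw [show 1/α * (-α) = -1 by field_simp, show -(1/α) * (-α) = 1 by field_simp]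
    rw [Real.rpow_one, Real.rpow_neg_one]
    ring
  have h2y : (b t) ^ (-(2*α)) = ((b t) ^ (-α))^2 := by
    rw [show -(2*α) = (-α) * 2 by ring, Real.rpow_mul hb0.le,
      show ((2:ℝ)) = ((2:ℕ):ℝ) by norm_num, Real.rpow_natCast]
  -- the measure value
  have hμ := hjoint (b t * x₁) (b t * x₂) hbx1 hbx2
  have hmin : min (b t * x₁) (b t * x₂) = b t * min x₁ x₂ := by
    rcases le_total x₁ x₂ with h | h
    · rw [min_eq_left h, min_eq_left (by nlinarith)]
    · rw [min_eq_right h, min_eq_right (by nlinarith)]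
  rw [hmin, Real.mul_rpow hb0.le hx₁.le, Real.mul_rpow hb0.le hx₂.le,
    Real.mul_rpow hb0.le (le_min hx₁.le hx₂.le), h2y, hy, ← hA, ← hB, ← hC] at hμ
  -- key identity
  have hsq : s t ^ 2 = 1 + 32 / t := Real.sq_sqrt (by positivity)
  have hkey : t * ((s t - 1)^2 + 2 * (s t - 1)) = 32 := by
    have hsq2 : t * s t ^ 2 = t + 32 := by field_simp at hsq; linarith
    linear_combination hsq2
  rw [hμ, hy]
  have hu4 : s t - 1 ≠ 0 := hu.ne'
  field_simp
  linear_combination (-16 * (A + B) : ℝ) * hkey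
end
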